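/- arXiv:1704.02034 — 9 statements merged into one kernel-verified Lean document; each statement's English description precedes it below -/
import Mathlib

section
/- Let Λ ∈ ℝ[X₁,…,Xₙ]* with Λ(p²) ≥ 0 for all p ∈ ℝ[X]. Then the ideal U_Λ = { p : Λ(p²) = 0 } is a radical ideal, i.e. g² ∈ U_Λ implies g ∈ U_Λ for all g ∈ ℝ[X]. -/
/-! Cauchy–Schwarz for the positive semidefinite form `(p, q) ↦ Λ(p q)` gives
`Λ(g²)² = Λ(1 · g²)² ≤ Λ(1) Λ(g⁴)`. -/

namespace LinearMap

variable {R A : Type*} [CommRing R] [LinearOrder R] [IsStrictOrderedRing R] [CommRing A]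
  [Algebra R A]

theorem apply_mul_sq_le_of_forall_sq_nonneg (L : A →ₗ[R] R) (hL : ∀ a, 0 ≤ L (a ^ 2))
    (a b : A) : L (a * b) ^ 2 ≤ L (a ^ 2) * L (b ^ 2) := by
  have h := BilinForm.apply_mul_apply_le_of_forall_zero_le ((LinearMap.mul R A).compr₂ L)
    (fun a => by simpa [sq] using hL a) a b
  simpa [sq, mul_comm b a] using h

theorem apply_sq_eq_zero_of_apply_sq_sq_eq_zero (L : A →ₗ[R] R) (hL : ∀ a, 0 ≤ L (a ^ 2))
    {a : A} (ha : L ((a ^ 2) ^ 2) = 0) : L (a ^ 2) = 0 := by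
  have h := L.apply_mul_sq_le_of_forall_sq_nonneg hL 1 (a ^ 2)
  rw [one_mul, ha, mul_zero] at h
  exact pow_eq_zero_iff two_ne_zero |>.mp (le_antisymm h (sq_nonneg _))

end LinearMap

/-- For a linear form `Λ` on `ℝ[X₁,…,Xₙ]` nonnegative on squares, the GNS kernel
`U_Λ = {p | Λ(p²) = 0}` is radical: `g² ∈ U_Λ` implies `g ∈ U_Λ`. -/
theorem GNS_kernel_radical {n : ℕ} (Λ : MvPolynomial (Fin n) ℝ →ₗ[ℝ] ℝ)
    (hΛ : ∀ p : MvPolynomial (Fin n) ℝ, 0 ≤ Λ (p ^ 2)) :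
    ∀ g : MvPolynomial (Fin n) ℝ, Λ ((g ^ 2) ^ 2) = 0 → Λ (g ^ 2) = 0 :=
  fun _ => Λ.apply_sq_eq_zero_of_apply_sq_sq_eq_zero hΛ
end

section
/- Let Λ = Σᵢ₌₁^N λᵢ ev_{aᵢ} ∈ ℝ[X₁,…,Xₙ]* with λᵢ > 0 and a₁,…,a_N ∈ ℝⁿ. Then dim(ℝ[X]/U_Λ) = |{a₁,…,a_N}|, where U_Λ = { p : Λ(p²) = 0 }. -/
/-!
Since `Λ(p²) = Σ λᵢ p(aᵢ)²` with all `λᵢ > 0`, the GNS kernel is exactly the kernel of evaluation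
at the points `aᵢ`. Evaluation at a finite set of points is onto the functions on that set, because
products of affine polynomials separating two points give an indicator polynomial for each point.
Hence `ℝ[X]/U_Λ` is isomorphic to the space of real functions on `{a₁,…,a_N}`.
-/

open MvPolynomial

theorem sum_mul_sq_eq_zero_iff {ι R : Type*} [CommRing R] [LinearOrder R] [IsStrictOrderedRing R]
    {s : Finset ι} {w f : ι → R} (hw : ∀ i ∈ s, 0 < w i) :
    ∑ i ∈ s, w i * f i ^ 2 = 0 ↔ ∀ i ∈ s, f i = 0 := by
  rw [Finset.sum_eq_zero_iff_of_nonneg fun i hi => mul_nonneg (hw i hi).le (sq_nonneg _)]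
  refine forall₂_congr fun i hi => ?_
  rw [mul_eq_zero, pow_eq_zero_iff two_ne_zero, or_iff_right (hw i hi).ne']

namespace MvPolynomial

variable {σ K : Type*} [Field K]

theorem exists_eval_eq_one_eq_zero {x y : σ → K} (h : x ≠ y) :
    ∃ p : MvPolynomial σ K, eval x p = 1 ∧ eval y p = 0 := by
  obtain ⟨j, hj⟩ := Function.ne_iff.mp h
  refine ⟨C (x j - y j)⁻¹ * (X j - C (y j)), ?_, ?_⟩
  · simp [inv_mul_cancel₀ (sub_ne_zero.mpr hj)]
  · simp

noncomputable def evalOn (S : Set (σ → K)) : MvPolynomial σ K →ₗ[K] (S → K) :=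
  LinearMap.pi fun x => (aeval x.1).toLinearMap

@[simp]
theorem evalOn_apply (S : Set (σ → K)) (p : MvPolynomial σ K) (x : S) :
    evalOn S p x = eval x.1 p := by
  simp [evalOn]

theorem exists_evalOn_eq_single {S : Set (σ → K)} [Finite S] [DecidableEq S] (s : S) :
    ∃ p : MvPolynomial σ K, evalOn S p = Pi.single s 1 := by
  have : Fintype S := Fintype.ofFinite S
  have hsep : ∀ t : S, ∃ q : MvPolynomial σ K, eval s.1 q = 1 ∧ (t ≠ s → eval t.1 q = 0) := by
    intro t
    by_cases hts : t = s
    · exact ⟨1, by simp, fun h => absurd hts h⟩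
    · obtain ⟨q, hq⟩ := exists_eval_eq_one_eq_zero (Subtype.coe_ne_coe.mpr (Ne.symm hts))
      exact ⟨q, hq.1, fun _ => hq.2⟩
  choose q hq_one hq_zero using hsep
  refine ⟨∏ t, q t, ?_⟩
  funext t
  rw [evalOn_apply, map_prod]
  by_cases hts : t = s
  · subst hts
    simp [hq_one]
  · rw [Pi.single_eq_of_ne hts]
    exact Finset.prod_eq_zero (Finset.mem_univ t) (hq_zero t hts)

theorem evalOn_surjective (S : Set (σ → K)) [Finite S] : Function.Surjective (evalOn S) := by
  classical
  rw [← LinearMap.range_eq_top, eq_top_iff, ← (Pi.basisFun K S).span_eq, Submodule.span_le]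
  rintro _ ⟨s, rfl⟩
  obtain ⟨p, hp⟩ := exists_evalOn_eq_single s
  exact ⟨p, by rw [hp, Pi.basisFun_apply]⟩

theorem finrank_quotient_ker_evalOn (S : Set (σ → K)) [Finite S] :
    Module.finrank K (MvPolynomial σ K ⧸ LinearMap.ker (evalOn S)) = Nat.card S := by
  have : Fintype S := Fintype.ofFinite S
  rw [(LinearMap.quotKerEquivOfSurjective _ (evalOn_surjective S)).finrank_eq,
    Module.finrank_fintype_fun_eq_card, Nat.card_eq_fintype_card]

theorem mem_ker_evalOn_range {ι : Type*} (a : ι → σ → K) (p : MvPolynomial σ K) :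
    p ∈ LinearMap.ker (evalOn (Set.range a)) ↔ ∀ i, eval (a i) p = 0 := by
  simp only [LinearMap.mem_ker, _root_.funext_iff, evalOn_apply, Pi.zero_apply, Subtype.forall,
    Set.forall_mem_range]

end MvPolynomial

/-- For `Λ = Σ λᵢ ev_{aᵢ}` with `λᵢ > 0`, the quotient `ℝ[X]/U_Λ` by the GNS kernel
`U_Λ = {p | Λ(p²) = 0}` has dimension equal to the number of distinct points among
`a₁,…,a_N`. -/
theorem finrank_quotient_GNS_kernel {n N : ℕ}
    (a : Fin N → (Fin n → ℝ)) (lam : Fin N → ℝ) (hlam : ∀ i, 0 < lam i)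
    (Λ : MvPolynomial (Fin n) ℝ →ₗ[ℝ] ℝ)
    (hΛ : ∀ p : MvPolynomial (Fin n) ℝ, Λ p = ∑ i, lam i * MvPolynomial.eval (a i) p)
    (U : Submodule ℝ (MvPolynomial (Fin n) ℝ))
    (hU : ∀ p : MvPolynomial (Fin n) ℝ, p ∈ U ↔ Λ (p ^ 2) = 0) :
    Module.finrank ℝ (MvPolynomial (Fin n) ℝ ⧸ U) = (Finset.univ.image a).card := by
  have hU_ker : U = LinearMap.ker (evalOn (Set.range a)) := by
    ext p
    simp only [hU, hΛ, map_pow, mem_ker_evalOn_range]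
    simpa using sum_mul_sq_eq_zero_iff (s := Finset.univ) fun i _ => hlam i
  rw [hU_ker, finrank_quotient_ker_evalOn, Nat.card_coe_set_eq, ← Set.ncard_coe_finset,
    Finset.coe_image, Finset.coe_univ, Set.image_univ]
end

section
/- Let f, p₁,…,p_m ∈ ℝ[X]_k define a polynomial optimization problem with feasible set S and optimal value P*. Suppose L ∈ ℝ[X]_k* satisfies L(1) = 1, L is bounded below on feasible solutions by P_k* ≤ P*, L(f) = P_k*, and L has a quadrature rule L(p) = Σᵢ₌₁^N λᵢ p(aᵢ) for all p ∈ ℝ[X]_l (some l ≤ k with f ∈ ℝ[X]_l), with all nodes aᵢ ∈ S and weights λᵢ > 0. Then L(f) = P* and every node aᵢ is a global minimizer of f on S, i.e. f(aᵢ) = P* for all i. -/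
/-!
Proof idea: the quadrature rule applied to `1` shows that the weights sum to `L 1 = 1`, so
`L f = ∑ λᵢ f(aᵢ)` is a convex combination of values of `f` on `S`, each at least `P*`.
Hence `P* ≤ L f = P_k* ≤ P*`, and `∑ λᵢ (f(aᵢ) - P*) = 0` with nonnegative terms and positive
weights forces `f(aᵢ) = P*` for every node.
-/

open MvPolynomial

theorem Finset.eq_of_sum_mul_le_sum_mul {ι 𝕜 : Type*} [Field 𝕜] [LinearOrder 𝕜]
    [IsStrictOrderedRing 𝕜] {s : Finset ι} {w x : ι → 𝕜} {c : 𝕜}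
    (hw : ∀ i ∈ s, 0 < w i) (hc : ∀ i ∈ s, c ≤ x i)
    (h : ∑ i ∈ s, w i * x i ≤ ∑ i ∈ s, w i * c) : ∀ i ∈ s, x i = c := by
  have hle : ∀ i ∈ s, w i * c ≤ w i * x i := fun i hi =>
    mul_le_mul_of_nonneg_left (hc i hi) (hw i hi).le
  have heq := (Finset.sum_eq_sum_iff_of_le hle).mp (le_antisymm (Finset.sum_le_sum hle) h)
  exact fun i hi => (mul_left_cancel₀ (hw i hi).ne' (heq i hi)).symm

def IsQuadratureRule {σ ι R : Type*} [CommRing R] [Fintype ι]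
    (L : MvPolynomial σ R →ₗ[R] R) (l : ℕ) (a : ι → σ → R) (w : ι → R) : Prop :=
  ∀ g : MvPolynomial σ R, g.totalDegree ≤ l → L g = ∑ i, w i * eval (a i) g

theorem IsQuadratureRule.map_one {σ ι R : Type*} [CommRing R] [Fintype ι]
    {L : MvPolynomial σ R →ₗ[R] R} {l : ℕ} {a : ι → σ → R} {w : ι → R}
    (hq : IsQuadratureRule L l a w) : L 1 = ∑ i, w i := by
  simpa using hq 1 (by simp)

theorem quadrature_optimality_general {n l N : ℕ}
    (f : MvPolynomial (Fin n) ℝ) (hfl : f.totalDegree ≤ l)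
    (S : Set (Fin n → ℝ))
    (Pstar : ℝ) (hPstar : IsGLB ((fun x => MvPolynomial.eval x f) '' S) Pstar)
    (Pk : ℝ) (hPk : Pk ≤ Pstar)
    (L : MvPolynomial (Fin n) ℝ →ₗ[ℝ] ℝ) (hL1 : L 1 = 1) (hLf : L f = Pk)
    (a : Fin N → (Fin n → ℝ)) (ha : ∀ i, a i ∈ S)
    (lam : Fin N → ℝ) (hlam : ∀ i, 0 < lam i)
    (hq : ∀ g : MvPolynomial (Fin n) ℝ, g.totalDegree ≤ l →
      L g = ∑ i, lam i * MvPolynomial.eval (a i) g) :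
    L f = Pstar ∧ ∀ i, MvPolynomial.eval (a i) f = Pstar := by
  have hquad : IsQuadratureRule L l a lam := hq
  have hweights : ∑ i, lam i = 1 := hquad.map_one.symm.trans hL1
  have hmean : L f = ∑ i, lam i * eval (a i) f := hquad f hfl
  have hlower : ∀ i, Pstar ≤ eval (a i) f := fun i => hPstar.1 ⟨a i, ha i, rfl⟩
  have hnodes : ∀ i, eval (a i) f = Pstar := fun i =>
    Finset.eq_of_sum_mul_le_sum_mul (fun i _ => hlam i) (fun i _ => hlower i)
      (by rw [← Finset.sum_mul, hweights, one_mul, ← hmean, hLf]; exact hPk) i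
      (Finset.mem_univ i)
  refine ⟨?_, hnodes⟩
  rw [hmean, Finset.sum_congr rfl fun i _ => congrArg (lam i * ·) (hnodes i),
    ← Finset.sum_mul, hweights, one_mul]

/-- If an optimal solution `L` of the degree-`k` moment relaxation (`L(1) = 1`,
`L(f) = P_k* ≤ P*`) has a quadrature rule on `ℝ[X]_l` (with `f ∈ ℝ[X]_l`, `l ≤ k`) whose
nodes lie in `S`, then `L(f) = P*` and every node is a global minimizer of `f` on `S`. -/
theorem quadrature_optimality {n m k l N : ℕ} (hl : l ≤ k)
    (f : MvPolynomial (Fin n) ℝ) (hfk : f.totalDegree ≤ k) (hfl : f.totalDegree ≤ l)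
    (p : Fin m → MvPolynomial (Fin n) ℝ)
    (S : Set (Fin n → ℝ)) (hS : S = {x | ∀ i, 0 ≤ MvPolynomial.eval x (p i)})
    (Pstar : ℝ) (hPstar : IsGLB ((fun x => MvPolynomial.eval x f) '' S) Pstar)
    (Pk : ℝ) (hPk : Pk ≤ Pstar)
    (L : MvPolynomial (Fin n) ℝ →ₗ[ℝ] ℝ) (hL1 : L 1 = 1) (hLf : L f = Pk)
    (a : Fin N → (Fin n → ℝ)) (ha : ∀ i, a i ∈ S)
    (lam : Fin N → ℝ) (hlam : ∀ i, 0 < lam i)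
    (hq : ∀ g : MvPolynomial (Fin n) ℝ, g.totalDegree ≤ l →
      L g = ∑ i, lam i * MvPolynomial.eval (a i) g) :
    L f = Pstar ∧ ∀ i, MvPolynomial.eval (a i) f = Pstar :=
  quadrature_optimality_general f hfl S Pstar hPstar Pk hPk L hL1 hLf a ha lam hlam hq
end

section
/- Let L ∈ ℝ[X₁,…,Xₙ]_{2d+2}* be nonnegative on squares, and suppose L has a quadrature rule on ℝ[X]_{2d+1} with N pairwise distinct nodes. Then N ≥ dim(T_L), where T_L = { p mod U_L : p ∈ ℝ[X]_d } ⊆ ℝ[X]_{d+1}/U_L is the GNS truncation of L. -/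
/-!
A polynomial `p` of degree `≤ d` that vanishes at every node has `L (p ^ 2) = 0`, because
`p ^ 2` has degree `≤ 2d + 1` and is therefore integrated exactly by the quadrature rule; so
`p ∈ U_L`. Hence on `ℝ[X]_d` the kernel of evaluation at the `N` nodes lies in the kernel of the
quotient map onto `T_L`, and `T_L` is a quotient of a subspace of `ℝ^N`.
-/

open MvPolynomial Module

theorem LinearMap.finrank_range_le_of_ker_le {R V M M' : Type*}
    [Ring R] [StrongRankCondition R] [AddCommGroup V] [Module R V]
    [AddCommGroup M] [Module R M] [AddCommGroup M'] [Module R M']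
    (f : V →ₗ[R] M) (g : V →ₗ[R] M') [Module.Finite R g.range] (h : g.ker ≤ f.ker) :
    finrank R f.range ≤ finrank R g.range := by
  have := Module.Finite.equiv g.quotKerEquivRange.symm
  calc finrank R f.range = finrank R (g.ker.liftQ f h).range := by rw [Submodule.range_liftQ]
    _ ≤ finrank R (V ⧸ g.ker) := LinearMap.finrank_range_le _
    _ = finrank R g.range := g.quotKerEquivRange.finrank_eq

theorem MvPolynomial.apply_sq_eq_zero_of_eval_eq_zero {R σ ι : Type*} [CommSemiring R]
    [Fintype ι] {m : ℕ} (L : MvPolynomial σ R →ₗ[R] R) (a : ι → σ → R) (lam : ι → R)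
    (hq : ∀ g : MvPolynomial σ R, g.totalDegree ≤ m → L g = ∑ i, lam i * eval (a i) g)
    {p : MvPolynomial σ R} (hp : 2 * p.totalDegree ≤ m) (hp0 : ∀ i, eval (a i) p = 0) :
    L (p ^ 2) = 0 := by
  rw [hq _ ((totalDegree_pow p 2).trans hp)]
  simp [hp0]

theorem nodes_ge_dim_truncation_general {n d N : ℕ}
    (L : MvPolynomial (Fin n) ℝ →ₗ[ℝ] ℝ)
    (U : Submodule ℝ ↥(restrictTotalDegree (Fin n) ℝ (d + 1)))
    (hU : ∀ p : ↥(restrictTotalDegree (Fin n) ℝ (d + 1)),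
      p ∈ U ↔ L ((p : MvPolynomial (Fin n) ℝ) ^ 2) = 0)
    (a : Fin N → (Fin n → ℝ))
    (lam : Fin N → ℝ)
    (hq : ∀ g : MvPolynomial (Fin n) ℝ, g.totalDegree ≤ 2 * d + 1 →
      L g = ∑ i, lam i * MvPolynomial.eval (a i) g) :
    Module.finrank ℝ
      ↥(Submodule.map U.mkQ
        (Submodule.comap (restrictTotalDegree (Fin n) ℝ (d + 1)).subtype
          (restrictTotalDegree (Fin n) ℝ d))) ≤ N := by
  set W := Submodule.comap (restrictTotalDegree (Fin n) ℝ (d + 1)).subtype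
    (restrictTotalDegree (Fin n) ℝ d)
  let ev : restrictTotalDegree (Fin n) ℝ (d + 1) →ₗ[ℝ] (Fin N → ℝ) :=
    LinearMap.pi fun i ↦ (aeval (a i)).toLinearMap ∘ₗ (restrictTotalDegree _ _ _).subtype
  have hker : (ev.domRestrict W).ker ≤ (U.mkQ.domRestrict W).ker := by
    intro p hp
    have hdeg : (p : MvPolynomial (Fin n) ℝ).totalDegree ≤ d :=
      (mem_restrictTotalDegree _ _ _).mp p.2
    have hp0 : ∀ i, eval (a i) (p : MvPolynomial (Fin n) ℝ) = 0 := fun i ↦ congrFun hp i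
    simpa [Submodule.Quotient.mk_eq_zero] using
      (hU p).mpr (apply_sq_eq_zero_of_eval_eq_zero L a lam hq (by omega) hp0)
  calc finrank ℝ (W.map U.mkQ) = finrank ℝ (U.mkQ.domRestrict W).range := by
        rw [LinearMap.range_domRestrict]
    _ ≤ finrank ℝ (ev.domRestrict W).range :=
        LinearMap.finrank_range_le_of_ker_le (V := W) _ _ hker
    _ ≤ finrank ℝ (Fin N → ℝ) := Submodule.finrank_le _
    _ = N := finrank_fin_fun ℝ

/-- If `L ∈ ℝ[X]_{2d+2}*` is nonnegative on squares and has a quadrature rule on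
`ℝ[X]_{2d+1}` with `N` pairwise distinct nodes, then `N ≥ dim T_L`, where `T_L` is the GNS
truncation of `L` (the image of `ℝ[X]_d` in `ℝ[X]_{d+1}/U_L`). -/
theorem nodes_ge_dim_truncation {n d N : ℕ}
    (L : MvPolynomial (Fin n) ℝ →ₗ[ℝ] ℝ)
    (hL : ∀ p : MvPolynomial (Fin n) ℝ, p.totalDegree ≤ d + 1 → 0 ≤ L (p ^ 2))
    (U : Submodule ℝ ↥(restrictTotalDegree (Fin n) ℝ (d + 1)))
    (hU : ∀ p : ↥(restrictTotalDegree (Fin n) ℝ (d + 1)),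
      p ∈ U ↔ L ((p : MvPolynomial (Fin n) ℝ) ^ 2) = 0)
    (a : Fin N → (Fin n → ℝ)) (ha : Function.Injective a)
    (lam : Fin N → ℝ) (hlam : ∀ i, 0 < lam i)
    (hq : ∀ g : MvPolynomial (Fin n) ℝ, g.totalDegree ≤ 2 * d + 1 →
      L g = ∑ i, lam i * MvPolynomial.eval (a i) g) :
    Module.finrank ℝ
      ↥(Submodule.map U.mkQ
        (Submodule.comap (restrictTotalDegree (Fin n) ℝ (d + 1)).subtype
          (restrictTotalDegree (Fin n) ℝ d))) ≤ N :=
  nodes_ge_dim_truncation_general L U hU a lam hq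
end

section
/- Every node of a quadrature rule for L lies in the complex variety of the truncated GNS kernel: if L(p) = Σᵢ₌₁^N λᵢ p(aᵢ) for all p ∈ ℝ[X]_{2d+2} with λᵢ > 0, then {a₁,…,a_N} ⊆ V(U_L), hence N ≤ |V_ℂ(U_L)| when the nodes are pairwise distinct. -/
open MvPolynomial

/-! A quadrature rule with positive weights turns `L (p ^ 2) = 0` into `∑ λᵢ p(aᵢ)² = 0`, a sum
of nonnegative terms, so every `p(aᵢ)` vanishes. Viewing the real nodes as complex points then
embeds the (distinct) nodes into the complex variety. -/

theorem eq_zero_of_sum_mul_sq_eq_zero {ι : Type*} [Fintype ι] {lam x : ι → ℝ}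
    (hlam : ∀ i, 0 < lam i) (hsum : ∑ i, lam i * x i ^ 2 = 0) (i : ι) : x i = 0 := by
  have hterm : lam i * x i ^ 2 = 0 := congrFun
    ((Fintype.sum_eq_zero_iff_of_nonneg fun j => mul_nonneg (hlam j).le (sq_nonneg (x j))).mp
      hsum) i
  exact pow_eq_zero_iff two_ne_zero |>.mp <| (mul_eq_zero.mp hterm).resolve_left (hlam i).ne'

theorem eval_eq_zero_of_quadrature {σ ι : Type*} [Fintype ι] {k : ℕ}
    (L : MvPolynomial σ ℝ →ₗ[ℝ] ℝ) (a : ι → σ → ℝ) {lam : ι → ℝ} (hlam : ∀ i, 0 < lam i)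
    (hq : ∀ g : MvPolynomial σ ℝ, g.totalDegree ≤ 2 * k → L g = ∑ i, lam i * eval (a i) g)
    {p : MvPolynomial σ ℝ} (hp : p.totalDegree ≤ k) (hLp : L (p ^ 2) = 0) (i : ι) :
    eval (a i) p = 0 := by
  have hdeg : (p ^ 2).totalDegree ≤ 2 * k :=
    (totalDegree_pow p 2).trans (Nat.mul_le_mul_left 2 hp)
  refine eq_zero_of_sum_mul_sq_eq_zero (x := fun j => eval (a j) p) hlam ?_ i
  simpa only [hq _ hdeg, map_pow] using hLp

theorem nodes_in_variety_of_kernel_general {n d N : ℕ}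
    (L : MvPolynomial (Fin n) ℝ →ₗ[ℝ] ℝ)
    (a : Fin N → (Fin n → ℝ))
    (lam : Fin N → ℝ) (hlam : ∀ i, 0 < lam i)
    (hq : ∀ g : MvPolynomial (Fin n) ℝ, g.totalDegree ≤ 2 * d + 2 →
      L g = ∑ i, lam i * MvPolynomial.eval (a i) g) :
    (∀ p : MvPolynomial (Fin n) ℝ, p.totalDegree ≤ d + 1 → L (p ^ 2) = 0 →
      ∀ i, MvPolynomial.eval (a i) p = 0) ∧
    (Function.Injective a →
      (N : Cardinal) ≤ Cardinal.mk
        {z : Fin n → ℂ | ∀ p : MvPolynomial (Fin n) ℝ, p.totalDegree ≤ d + 1 →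
          L (p ^ 2) = 0 → MvPolynomial.aeval z p = 0}) := by
  have nodes_vanish : ∀ p : MvPolynomial (Fin n) ℝ, p.totalDegree ≤ d + 1 → L (p ^ 2) = 0 →
      ∀ i, eval (a i) p = 0 :=
    fun p hp hLp => eval_eq_zero_of_quadrature (k := d + 1) L a hlam hq hp hLp
  refine ⟨nodes_vanish, fun hinj => ?_⟩
  have complex_nodes_injective : Function.Injective fun i => algebraMap ℝ ℂ ∘ a i :=
    Complex.ofReal_injective.comp_left.comp hinj
  calc (N : Cardinal) = Cardinal.mk (Set.range fun i => algebraMap ℝ ℂ ∘ a i) := by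
        rw [Cardinal.mk_range_eq _ complex_nodes_injective, Cardinal.mk_fin]
    _ ≤ _ := by
      refine Cardinal.mk_le_mk_of_subset ?_
      rintro _ ⟨i, rfl⟩ p hp hLp
      exact (aeval_algebraMap_eq_zero_iff ℂ (a i) p).2 (nodes_vanish p hp hLp i)

/-- Every node of a quadrature rule for `L` lies in the variety of the truncated GNS kernel
`U_L`; hence, when the nodes are pairwise distinct, `N ≤ |V_ℂ(U_L)|`. -/
theorem nodes_in_variety_of_kernel {n d N : ℕ}
    (L : MvPolynomial (Fin n) ℝ →ₗ[ℝ] ℝ)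
    (hL : ∀ p : MvPolynomial (Fin n) ℝ, p.totalDegree ≤ d + 1 → 0 ≤ L (p ^ 2))
    (a : Fin N → (Fin n → ℝ))
    (lam : Fin N → ℝ) (hlam : ∀ i, 0 < lam i)
    (hq : ∀ g : MvPolynomial (Fin n) ℝ, g.totalDegree ≤ 2 * d + 2 →
      L g = ∑ i, lam i * MvPolynomial.eval (a i) g) :
    (∀ p : MvPolynomial (Fin n) ℝ, p.totalDegree ≤ d + 1 → L (p ^ 2) = 0 →
      ∀ i, MvPolynomial.eval (a i) p = 0) ∧
    (Function.Injective a →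
      (N : Cardinal) ≤ Cardinal.mk
        {z : Fin n → ℂ | ∀ p : MvPolynomial (Fin n) ℝ, p.totalDegree ≤ d + 1 →
          L (p ^ 2) = 0 → MvPolynomial.aeval z p = 0}) :=
  nodes_in_variety_of_kernel_general L a lam hlam hq
end

section
/- Suppose L ∈ ℝ[X₁,…,Xₙ]_{2d+2}* is flat (ℝ[X]_{d+1} = ℝ[X]_d + U_L) and nonnegative on squares. Then the truncated GNS multiplication operators M_{L,1},…,M_{L,n} on T_L pairwise commute. -/
/-!
Write `V = ℝ[X]_{d+1}`, `W = ℝ[X]_d`. Flatness lets every `q ∈ V` be written `q = a + u` with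
`a ∈ W` and `u ∈ U_L`, and `U_L` is killed by `L(V · _)`; hence two elements of `V` that pair
alike with `W` pair alike with all of `V`, and an element of `W` that pairs trivially with `W`
lies in `U_L`. If `r ∈ W` represents `M_j p̄`, i.e. `L(r s) = L(Xⱼ p s)` for `s ∈ W`, applying
this to `q = Xᵢ s` gives `L(Xᵢ r s) = L(Xᵢ Xⱼ p s)`. So representatives of `M_i M_j p̄` and
`M_j M_i p̄` pair alike with `W`, and therefore have the same class.
-/

open MvPolynomial

theorem MvPolynomial.X_mul_mem_restrictTotalDegree {σ R : Type*} [CommSemiring R] {d : ℕ}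
    (i : σ) {p : MvPolynomial σ R} (hp : p ∈ restrictTotalDegree σ R d) :
    X i * p ∈ restrictTotalDegree σ R (d + 1) := by
  rw [mem_restrictTotalDegree] at hp ⊢
  have hX : (X i : MvPolynomial σ R).totalDegree ≤ 1 :=
    (totalDegree_monomial_le _ _).trans (by simp)
  exact (totalDegree_mul _ _).trans (by omega)

section FlatGNS

variable {R A : Type*} [CommRing R] [CommRing A] [Algebra R A] {L : A →ₗ[R] R}
  {U V W : Submodule R A}

/-- The map `ℝ[X]_d → V_L, p ↦ p̄`, whose range is `T_L`. -/
abbrev truncatedGNSMap (U V W : Submodule R A) (hWV : W ≤ V) : W →ₗ[R] V ⧸ U.comap V.subtype :=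
  (U.comap V.subtype).mkQ ∘ₗ Submodule.inclusion hWV

theorem map_mul_eq_of_forall_mem_of_flat
    (hU : ∀ p, p ∈ U ↔ p ∈ V ∧ ∀ q ∈ V, L (p * q) = 0) (hflat : V ≤ W ⊔ U)
    {f g : A} (hf : f ∈ V) (hg : g ∈ V) (hfg : ∀ a ∈ W, L (f * a) = L (g * a))
    {q : A} (hq : q ∈ V) : L (f * q) = L (g * q) := by
  obtain ⟨a, ha, u, hu, rfl⟩ := Submodule.mem_sup.1 (hflat hq)
  have hu' := ((hU u).1 hu).2
  rw [mul_add, mul_add, map_add, map_add, hfg a ha, mul_comm f u, mul_comm g u, hu' f hf, hu' g hg]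

theorem truncatedGNSMap_eq_of_forall_map_mul_eq
    (hU : ∀ p, p ∈ U ↔ p ∈ V ∧ ∀ q ∈ V, L (p * q) = 0) (hflat : V ≤ W ⊔ U) (hWV : W ≤ V)
    {w₁ w₂ : W} (h : ∀ s : W, L (w₁ * s) = L (w₂ * s)) :
    truncatedGNSMap U V W hWV w₁ = truncatedGNSMap U V W hWV w₂ := by
  rw [LinearMap.comp_apply, LinearMap.comp_apply, Submodule.mkQ_apply, Submodule.mkQ_apply,
    Submodule.Quotient.eq, Submodule.mem_comap, map_sub]
  refine (hU _).2 ⟨V.sub_mem (hWV w₁.2) (hWV w₂.2), fun q hq => ?_⟩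
  rw [Submodule.subtype_apply, Submodule.subtype_apply, Submodule.coe_inclusion,
    Submodule.coe_inclusion, sub_mul, map_sub, sub_eq_zero]
  exact map_mul_eq_of_forall_mem_of_flat hU hflat (hWV w₁.2) (hWV w₂.2)
    (fun a ha => h ⟨a, ha⟩) hq

variable {ι : Type*} {x : ι → A} {hWV : W ≤ V}
  {β : V ⧸ U.comap V.subtype → V ⧸ U.comap V.subtype → R}
  {M : ι → Module.End R (LinearMap.range (truncatedGNSMap U V W hWV))}

theorem map_mul_eq_of_truncatedGNSMap_eq_apply
    (hβ : ∀ p q : V, β ((U.comap V.subtype).mkQ p) ((U.comap V.subtype).mkQ q) = L (p * q))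
    (hM : ∀ (i : ι) (p q : W), β (M i ⟨truncatedGNSMap U V W hWV p, p, rfl⟩)
      (truncatedGNSMap U V W hWV q) = L (x i * p * q))
    (i : ι) {t : LinearMap.range (truncatedGNSMap U V W hWV)} {p r : W}
    (hp : truncatedGNSMap U V W hWV p = t) (hr : truncatedGNSMap U V W hWV r = M i t) (s : W) :
    L (r * s) = L (x i * p * s) := by
  obtain rfl : t = ⟨truncatedGNSMap U V W hWV p, p, rfl⟩ := Subtype.ext hp.symm
  rw [← hM i p s, ← hr]
  exact (hβ (Submodule.inclusion hWV r) (Submodule.inclusion hWV s)).symm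

theorem map_mul_eq_of_truncatedGNSMap_eq_apply_apply
    (hU : ∀ p, p ∈ U ↔ p ∈ V ∧ ∀ q ∈ V, L (p * q) = 0) (hflat : V ≤ W ⊔ U)
    (hx : ∀ i, ∀ s ∈ W, x i * s ∈ V)
    (hβ : ∀ p q : V, β ((U.comap V.subtype).mkQ p) ((U.comap V.subtype).mkQ q) = L (p * q))
    (hM : ∀ (i : ι) (p q : W), β (M i ⟨truncatedGNSMap U V W hWV p, p, rfl⟩)
      (truncatedGNSMap U V W hWV q) = L (x i * p * q))
    (i j : ι) {t : LinearMap.range (truncatedGNSMap U V W hWV)} {p w : W}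
    (hp : truncatedGNSMap U V W hWV p = t) (hw : truncatedGNSMap U V W hWV w = M i (M j t))
    (s : W) : L (w * s) = L (x i * x j * p * s) := by
  obtain ⟨r, hr⟩ := (M j t).2
  have hrep := map_mul_eq_of_truncatedGNSMap_eq_apply hβ hM j hp hr
  calc L (w * s) = L (r * (x i * s)) := by
        rw [map_mul_eq_of_truncatedGNSMap_eq_apply hβ hM i hr hw s]; ring_nf
    _ = L (x j * p * (x i * s)) :=
        map_mul_eq_of_forall_mem_of_flat hU hflat (hWV r.2) (hx j p p.2)
          (fun a ha => hrep ⟨a, ha⟩) (hx i s s.2)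
    _ = L (x i * x j * p * s) := by ring_nf

theorem truncatedGNS_mul_comm
    (hU : ∀ p, p ∈ U ↔ p ∈ V ∧ ∀ q ∈ V, L (p * q) = 0) (hflat : V ≤ W ⊔ U)
    (hx : ∀ i, ∀ s ∈ W, x i * s ∈ V)
    (hβ : ∀ p q : V, β ((U.comap V.subtype).mkQ p) ((U.comap V.subtype).mkQ q) = L (p * q))
    (hM : ∀ (i : ι) (p q : W), β (M i ⟨truncatedGNSMap U V W hWV p, p, rfl⟩)
      (truncatedGNSMap U V W hWV q) = L (x i * p * q))
    (i j : ι) : M i * M j = M j * M i := by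
  refine LinearMap.ext fun t => Subtype.ext ?_
  obtain ⟨p, hp⟩ := t.2
  obtain ⟨wij, hij⟩ := (M i (M j t)).2
  obtain ⟨wji, hji⟩ := (M j (M i t)).2
  rw [Module.End.mul_apply, Module.End.mul_apply, ← hij, ← hji]
  refine truncatedGNSMap_eq_of_forall_map_mul_eq hU hflat hWV fun s => ?_
  rw [map_mul_eq_of_truncatedGNSMap_eq_apply_apply hU hflat hx hβ hM i j hp hij,
    map_mul_eq_of_truncatedGNSMap_eq_apply_apply hU hflat hx hβ hM j i hp hji, mul_comm (x i)]

end FlatGNS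

theorem flat_implies_GNS_operators_commute_general {n d : ℕ}
    (L : MvPolynomial (Fin n) ℝ →ₗ[ℝ] ℝ)
    (U : Submodule ℝ (MvPolynomial (Fin n) ℝ))
    (hU : ∀ p : MvPolynomial (Fin n) ℝ, p ∈ U ↔ (p.totalDegree ≤ d + 1 ∧
      ∀ q : MvPolynomial (Fin n) ℝ, q.totalDegree ≤ d + 1 → L (p * q) = 0))
    (hflat : restrictTotalDegree (Fin n) ℝ (d + 1) ≤ restrictTotalDegree (Fin n) ℝ d ⊔ U)
    (hAB : restrictTotalDegree (Fin n) ℝ d ≤ restrictTotalDegree (Fin n) ℝ (d + 1))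
    (β : (↥(restrictTotalDegree (Fin n) ℝ (d + 1)) ⧸
        U.comap (restrictTotalDegree (Fin n) ℝ (d + 1)).subtype) →
      (↥(restrictTotalDegree (Fin n) ℝ (d + 1)) ⧸
        U.comap (restrictTotalDegree (Fin n) ℝ (d + 1)).subtype) → ℝ)
    (hβ : ∀ p q : ↥(restrictTotalDegree (Fin n) ℝ (d + 1)),
      β ((U.comap (restrictTotalDegree (Fin n) ℝ (d + 1)).subtype).mkQ p)
        ((U.comap (restrictTotalDegree (Fin n) ℝ (d + 1)).subtype).mkQ q) =
      L ((p : MvPolynomial (Fin n) ℝ) * (q : MvPolynomial (Fin n) ℝ)))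
    (M : Fin n → Module.End ℝ
      ↥(LinearMap.range ((U.comap (restrictTotalDegree (Fin n) ℝ (d + 1)).subtype).mkQ ∘ₗ
        Submodule.inclusion hAB)))
    (hM : ∀ (i : Fin n) (p q : ↥(restrictTotalDegree (Fin n) ℝ d)),
      β (M i ⟨((U.comap (restrictTotalDegree (Fin n) ℝ (d + 1)).subtype).mkQ ∘ₗ
            Submodule.inclusion hAB) p, ⟨p, rfl⟩⟩ :
          ↥(restrictTotalDegree (Fin n) ℝ (d + 1)) ⧸
            U.comap (restrictTotalDegree (Fin n) ℝ (d + 1)).subtype)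
        (((U.comap (restrictTotalDegree (Fin n) ℝ (d + 1)).subtype).mkQ ∘ₗ
            Submodule.inclusion hAB) q) =
      L (X i * (p : MvPolynomial (Fin n) ℝ) * (q : MvPolynomial (Fin n) ℝ))) :
    ∀ i j : Fin n, M i * M j = M j * M i := by
  have hU' : ∀ p, p ∈ U ↔ p ∈ restrictTotalDegree (Fin n) ℝ (d + 1) ∧
      ∀ q ∈ restrictTotalDegree (Fin n) ℝ (d + 1), L (p * q) = 0 := by
    simpa only [mem_restrictTotalDegree] using hU
  exact truncatedGNS_mul_comm hU' hflat (fun i _ => X_mul_mem_restrictTotalDegree i) hβ hM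

/-- If `L ∈ ℝ[X]_{2d+2}*` is flat (`ℝ[X]_{d+1} = ℝ[X]_d + U_L`) and nonnegative on squares,
then the truncated GNS multiplication operators `M_{L,1},…,M_{L,n}` on `T_L` pairwise
commute.  The operators are characterized by `⟨M_{L,i} p̄, q̄⟩_L = L(Xᵢ p q)` for
`p, q ∈ ℝ[X]_d`, where `β(p̄, q̄) = L(pq)` is the GNS inner product. -/
theorem flat_implies_GNS_operators_commute {n d : ℕ}
    (L : MvPolynomial (Fin n) ℝ →ₗ[ℝ] ℝ)
    (hL : ∀ p : MvPolynomial (Fin n) ℝ, p.totalDegree ≤ d + 1 → 0 ≤ L (p ^ 2))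
    (U : Submodule ℝ (MvPolynomial (Fin n) ℝ))
    (hU : ∀ p : MvPolynomial (Fin n) ℝ, p ∈ U ↔ (p.totalDegree ≤ d + 1 ∧
      ∀ q : MvPolynomial (Fin n) ℝ, q.totalDegree ≤ d + 1 → L (p * q) = 0))
    (hflat : restrictTotalDegree (Fin n) ℝ (d + 1) ≤ restrictTotalDegree (Fin n) ℝ d ⊔ U)
    (hAB : restrictTotalDegree (Fin n) ℝ d ≤ restrictTotalDegree (Fin n) ℝ (d + 1))
    (β : (↥(restrictTotalDegree (Fin n) ℝ (d + 1)) ⧸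
        U.comap (restrictTotalDegree (Fin n) ℝ (d + 1)).subtype) →
      (↥(restrictTotalDegree (Fin n) ℝ (d + 1)) ⧸
        U.comap (restrictTotalDegree (Fin n) ℝ (d + 1)).subtype) → ℝ)
    (hβ : ∀ p q : ↥(restrictTotalDegree (Fin n) ℝ (d + 1)),
      β ((U.comap (restrictTotalDegree (Fin n) ℝ (d + 1)).subtype).mkQ p)
        ((U.comap (restrictTotalDegree (Fin n) ℝ (d + 1)).subtype).mkQ q) =
      L ((p : MvPolynomial (Fin n) ℝ) * (q : MvPolynomial (Fin n) ℝ)))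
    (M : Fin n → Module.End ℝ
      ↥(LinearMap.range ((U.comap (restrictTotalDegree (Fin n) ℝ (d + 1)).subtype).mkQ ∘ₗ
        Submodule.inclusion hAB)))
    (hM : ∀ (i : Fin n) (p q : ↥(restrictTotalDegree (Fin n) ℝ d)),
      β (M i ⟨((U.comap (restrictTotalDegree (Fin n) ℝ (d + 1)).subtype).mkQ ∘ₗ
            Submodule.inclusion hAB) p, ⟨p, rfl⟩⟩ :
          ↥(restrictTotalDegree (Fin n) ℝ (d + 1)) ⧸
            U.comap (restrictTotalDegree (Fin n) ℝ (d + 1)).subtype)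
        (((U.comap (restrictTotalDegree (Fin n) ℝ (d + 1)).subtype).mkQ ∘ₗ
            Submodule.inclusion hAB) q) =
      L (X i * (p : MvPolynomial (Fin n) ℝ) * (q : MvPolynomial (Fin n) ℝ))) :
    ∀ i j : Fin n, M i * M j = M j * M i :=
  flat_implies_GNS_operators_commute_general L U hU hflat hAB β hβ M hM
end

section
/- Assume the truncated GNS multiplication operators M_{L,1},…,M_{L,n} pairwise commute. Then for all p ∈ ℝ[X]_{d+1}: p(M_{L,1},…,M_{L,n})(1̄) = Π_L(p̄), where 1̄ is the class of the constant polynomial 1 and Π_L is the orthogonal projection of V_L onto T_L. -/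
/-!
Since `U` is the radical of the positive semidefinite form `(p, q) ↦ L (p * q)` on `ℝ[X]_{d+1}`,
the pairing `β` is nondegenerate on `T_L`: a vector of `T_L` is determined by its pairings with
`T_L`. Peeling off one commuting factor `M_i` at a time gives `β (M^α 1̄) q̄ = L (X^α * q)`
for `|α| ≤ d + 1`; for `|α| ≤ d` nondegeneracy upgrades this to `M^α 1̄ = X̄^α`, which feeds
the next step. Summing over the monomials of `p`, both `p(M) 1̄` and `Π_L p̄` lie in `T_L` and pair
with every `q̄ ∈ T_L` to `L (p * q)`, so they coincide.
-/

open MvPolynomial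

open scoped IsMulCommutative in
theorem List.prod_ofFn_pow_add_single_of_commute {M : Type*} [Monoid M] {n : ℕ}
    {f : Fin n → M} (hf : ∀ i j, Commute (f i) (f j)) (α : Fin n → ℕ) (i : Fin n) :
    (List.ofFn fun j => f j ^ (α + Pi.single i 1 : Fin n → ℕ) j).prod =
      f i * (List.ofFn fun j => f j ^ α j).prod := by
  have : IsMulCommutative (Submonoid.closure (Set.range f)) :=
    Submonoid.isMulCommutative_closure M (by rintro _ ⟨a, rfl⟩ _ ⟨b, rfl⟩; exact hf a b)
  let g : Fin n → Submonoid.closure (Set.range f) :=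
    fun j => ⟨f j, Submonoid.subset_closure ⟨j, rfl⟩⟩
  have hprod : ∀ γ : Fin n → ℕ,
      (List.ofFn fun j => f j ^ γ j).prod = ((∏ j, g j ^ γ j : Submonoid.closure _) : M) := by
    intro γ
    rw [← List.prod_ofFn, Submonoid.coe_list_prod, List.map_ofFn]
    rfl
  rw [hprod, hprod]
  simp only [Pi.add_apply, pow_add, Finset.prod_mul_distrib, Pi.single_apply, pow_ite, pow_one,
    pow_zero, Finset.prod_ite_eq', Finset.mem_univ, if_true, mul_comm _ (g i)]
  rfl

theorem Finsupp.induction_add_single_one {σ : Type*} {P : (σ →₀ ℕ) → Prop} (zero : P 0)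
    (add_single : ∀ α i, P α → P (α + Finsupp.single i 1)) (α : σ →₀ ℕ) : P α := by
  induction α using Finsupp.induction with
  | zero => exact zero
  | single_add i b α _ hb ih =>
    clear hb
    induction b with
    | zero => simpa using ih
    | succ b ihb =>
      have := add_single _ i ihb
      rwa [add_right_comm, ← Finsupp.single_add] at this

theorem LinearMap.map_mul_eq_zero_of_map_mul_self_eq_zero {R : Type*} [CommRing R] [Algebra ℝ R]
    {L : R →ₗ[ℝ] ℝ} {E : Submodule ℝ R} (hL : ∀ p ∈ E, 0 ≤ L (p ^ 2)) {r s : R}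
    (hr : r ∈ E) (hs : s ∈ E) (hr0 : L (r * r) = 0) : L (r * s) = 0 := by
  have hquad : ∀ t : ℝ, 0 ≤ L (s * s) * (t * t) + 2 * L (r * s) * t + 0 := by
    intro t
    have expand : (r + t • s) ^ 2 = r * r + (2 * t) • (r * s) + (t * t) • (s * s) := by
      simp only [Algebra.smul_def, map_mul, map_ofNat]
      ring
    have := hL _ (E.add_mem hr (E.smul_mem t hs))
    rw [expand, map_add, map_add, map_smul, map_smul, hr0, smul_eq_mul, smul_eq_mul] at this
    linarith
  have := discrim_le_zero hquad
  rw [discrim] at this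
  nlinarith [sq_nonneg (L (r * s))]

section GNS

variable {R : Type*} [CommRing R] [Algebra ℝ R] {L : R →ₗ[ℝ] ℝ} {E A : Submodule ℝ R}
  {N : Submodule ℝ E} {β : E ⧸ N → E ⧸ N → ℝ}

theorem isLinearMap_pairing_left (hβ : ∀ p q : E, β (N.mkQ p) (N.mkQ q) = L (p * q))
    (z : E ⧸ N) : IsLinearMap ℝ (β · z) := by
  obtain ⟨c, rfl⟩ := N.mkQ_surjective z
  constructor
  · intro x y
    obtain ⟨a, rfl⟩ := N.mkQ_surjective x
    obtain ⟨b, rfl⟩ := N.mkQ_surjective y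
    simp only [← map_add, hβ, Submodule.coe_add, add_mul]
  · intro t x
    obtain ⟨a, rfl⟩ := N.mkQ_surjective x
    rw [← map_smul, hβ, hβ, Submodule.coe_smul, smul_mul_assoc, map_smul, smul_eq_mul]

theorem mkQ_eq_zero_of_map_mul_self_eq_zero (hL : ∀ p ∈ E, 0 ≤ L (p ^ 2))
    (hN : ∀ p : E, p ∈ N ↔ ∀ q : E, L (p * q) = 0) {p : E} (hp : L (p * p) = 0) :
    N.mkQ p = 0 :=
  (Submodule.Quotient.mk_eq_zero N).2 <| (hN p).2 fun q =>
    LinearMap.map_mul_eq_zero_of_map_mul_self_eq_zero hL p.2 q.2 hp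

theorem eq_of_forall_pairing_eq (hL : ∀ p ∈ E, 0 ≤ L (p ^ 2))
    (hN : ∀ p : E, p ∈ N ↔ ∀ q : E, L (p * q) = 0)
    (hβ : ∀ p q : E, β (N.mkQ p) (N.mkQ q) = L (p * q)) (hAE : A ≤ E) {u v : E ⧸ N}
    (hu : u ∈ LinearMap.range (N.mkQ ∘ₗ Submodule.inclusion hAE))
    (hv : v ∈ LinearMap.range (N.mkQ ∘ₗ Submodule.inclusion hAE))
    (h : ∀ q : A,
      β u (N.mkQ (Submodule.inclusion hAE q)) = β v (N.mkQ (Submodule.inclusion hAE q))) :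
    u = v := by
  obtain ⟨r, rfl⟩ := hu
  obtain ⟨s, rfl⟩ := hv
  rw [← sub_eq_zero, ← map_sub]
  refine mkQ_eq_zero_of_map_mul_self_eq_zero hL hN ?_
  have hrs := h (r - s)
  rwa [← sub_eq_zero, ← (isLinearMap_pairing_left hβ _).map_sub, ← map_sub,
    LinearMap.comp_apply, hβ] at hrs

end GNS

section TruncatedMultiplication

variable {n d : ℕ} {L : MvPolynomial (Fin n) ℝ →ₗ[ℝ] ℝ}
  {hAB : restrictTotalDegree (Fin n) ℝ d ≤ restrictTotalDegree (Fin n) ℝ (d + 1)}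
  {N : Submodule ℝ (restrictTotalDegree (Fin n) ℝ (d + 1))}
  {β : restrictTotalDegree (Fin n) ℝ (d + 1) ⧸ N →
    restrictTotalDegree (Fin n) ℝ (d + 1) ⧸ N → ℝ}
  {M : Fin n → Module.End ℝ (LinearMap.range (N.mkQ ∘ₗ Submodule.inclusion hAB))}

local notation "ℝ[X]_" k:max => restrictTotalDegree (Fin n) ℝ k

local notation "ι" => N.mkQ ∘ₗ Submodule.inclusion hAB

theorem monomial_mem_restrictTotalDegree {α : Fin n →₀ ℕ} (hα : α.degree ≤ d) :
    monomial α (1 : ℝ) ∈ ℝ[X]_d :=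
  (mem_restrictTotalDegree _ _ _).2 ((totalDegree_monomial α one_ne_zero).trans_le hα)

theorem pairing_prod_pow_apply_one (hL : ∀ p ∈ ℝ[X]_(d + 1), 0 ≤ L (p ^ 2))
    (hN : ∀ p, p ∈ N ↔ ∀ q : ℝ[X]_(d + 1), L (p * q) = 0)
    (hβ : ∀ p q, β (N.mkQ p) (N.mkQ q) = L (p * q))
    (h1 : (1 : MvPolynomial (Fin n) ℝ) ∈ ℝ[X]_d)
    (hM : ∀ (i : Fin n) (p q : ℝ[X]_d),
      β (M i ⟨ι p, p, rfl⟩) (ι q) = L (X i * p.1 * q.1))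
    (hcomm : ∀ i j, Commute (M i) (M j)) (α : Fin n →₀ ℕ) (hα : α.degree ≤ d + 1)
    (q : ℝ[X]_d) :
    β ((List.ofFn fun i => M i ^ α i).prod ⟨ι ⟨1, h1⟩, _, rfl⟩) (ι q) =
      L (monomial α 1 * q.1) := by
  induction α using Finsupp.induction_add_single_one generalizing q with
  | zero =>
    simp only [Finsupp.coe_zero, Pi.zero_apply, pow_zero, List.ofFn_const, List.prod_replicate,
      one_pow, Module.End.one_apply]
    exact hβ _ _
  | add_single α i ih =>
    have hα' : α.degree ≤ d := by
      rw [map_add, Finsupp.degree_single] at hα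
      omega
    have hmem := monomial_mem_restrictTotalDegree hα'
    have heval : (List.ofFn fun i => M i ^ α i).prod ⟨ι ⟨1, h1⟩, _, rfl⟩ =
        ⟨ι ⟨monomial α 1, hmem⟩, _, rfl⟩ :=
      Subtype.ext <| eq_of_forall_pairing_eq hL hN hβ hAB (Subtype.prop _) ⟨_, rfl⟩
        fun q => (ih (hα'.trans d.le_succ) q).trans
          (hβ (Submodule.inclusion hAB ⟨_, hmem⟩) (Submodule.inclusion hAB q)).symm
    rw [Finsupp.coe_add, Finsupp.single_eq_pi_single,
      List.prod_ofFn_pow_add_single_of_commute hcomm, Module.End.mul_apply, heval, hM,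
      monomial_add_single, pow_one, mul_comm (monomial α 1)]

theorem pairing_eval_apply_one (hL : ∀ p ∈ ℝ[X]_(d + 1), 0 ≤ L (p ^ 2))
    (hN : ∀ p, p ∈ N ↔ ∀ q : ℝ[X]_(d + 1), L (p * q) = 0)
    (hβ : ∀ p q, β (N.mkQ p) (N.mkQ q) = L (p * q))
    (h1 : (1 : MvPolynomial (Fin n) ℝ) ∈ ℝ[X]_d)
    (hM : ∀ (i : Fin n) (p q : ℝ[X]_d),
      β (M i ⟨ι p, p, rfl⟩) (ι q) = L (X i * p.1 * q.1))
    (hcomm : ∀ i j, Commute (M i) (M j)) (p : ℝ[X]_(d + 1)) (q : ℝ[X]_d) :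
    β ((∑ α ∈ p.1.support, p.1.coeff α • (List.ofFn fun i => M i ^ α i).prod)
        ⟨ι ⟨1, h1⟩, _, rfl⟩) (ι q) = L (p.1 * q.1) := by
  have hdeg : p.1.totalDegree ≤ d + 1 := (mem_restrictTotalDegree _ _ _).1 p.2
  have hlin := isLinearMap_pairing_left hβ (ι q)
  calc _ = ∑ α ∈ p.1.support, p.1.coeff α *
          β ((List.ofFn fun i => M i ^ α i).prod ⟨ι ⟨1, h1⟩, _, rfl⟩) (ι q) := by
        rw [LinearMap.sum_apply, Submodule.coe_sum, ← IsLinearMap.mk'_apply hlin, map_sum]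
        simp only [IsLinearMap.mk'_apply, LinearMap.smul_apply, Submodule.coe_smul, hlin.map_smul,
          smul_eq_mul]
    _ = ∑ α ∈ p.1.support, p.1.coeff α * L (monomial α 1 * q.1) :=
        Finset.sum_congr rfl fun α hα => congrArg _ <|
          pairing_prod_pow_apply_one hL hN hβ h1 hM hcomm α ((le_totalDegree hα).trans hdeg) q
    _ = L (p * q) := by
        conv_rhs => rw [p.1.as_sum, Finset.sum_mul, map_sum]
        refine Finset.sum_congr rfl fun α _ => ?_
        have hmono : monomial α (p.1.coeff α) = p.1.coeff α • monomial α (1 : ℝ) := by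
          rw [smul_monomial, smul_eq_mul, mul_one]
        rw [hmono, smul_mul_assoc, map_smul, smul_eq_mul]

end TruncatedMultiplication

/-- If the truncated GNS multiplication operators `M_{L,1},…,M_{L,n}` pairwise commute, then
for every `p ∈ ℝ[X]_{d+1}` one has `p(M_{L,1},…,M_{L,n})(1̄) = Π_L(p̄)`, where `Π_L` is the
orthogonal projection of `V_L = ℝ[X]_{d+1}/U_L` onto the GNS truncation `T_L` (the image of
`ℝ[X]_d`), `β(p̄,q̄) = L(pq)` is the GNS inner product, and `p(M_{L,1},…,M_{L,n})` is formed
by substituting the commuting operators into `p`. -/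
theorem commuting_operators_eval_one {n d : ℕ}
    (L : MvPolynomial (Fin n) ℝ →ₗ[ℝ] ℝ)
    (hL : ∀ p : MvPolynomial (Fin n) ℝ, p.totalDegree ≤ d + 1 → 0 ≤ L (p ^ 2))
    (U : Submodule ℝ (MvPolynomial (Fin n) ℝ))
    (hU : ∀ p : MvPolynomial (Fin n) ℝ, p ∈ U ↔ (p.totalDegree ≤ d + 1 ∧
      ∀ q : MvPolynomial (Fin n) ℝ, q.totalDegree ≤ d + 1 → L (p * q) = 0))
    (hAB : restrictTotalDegree (Fin n) ℝ d ≤ restrictTotalDegree (Fin n) ℝ (d + 1))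
    (h1 : (1 : MvPolynomial (Fin n) ℝ) ∈ restrictTotalDegree (Fin n) ℝ d)
    (β : (↥(restrictTotalDegree (Fin n) ℝ (d + 1)) ⧸
        U.comap (restrictTotalDegree (Fin n) ℝ (d + 1)).subtype) →
      (↥(restrictTotalDegree (Fin n) ℝ (d + 1)) ⧸
        U.comap (restrictTotalDegree (Fin n) ℝ (d + 1)).subtype) → ℝ)
    (hβ : ∀ p q : ↥(restrictTotalDegree (Fin n) ℝ (d + 1)),
      β ((U.comap (restrictTotalDegree (Fin n) ℝ (d + 1)).subtype).mkQ p)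
        ((U.comap (restrictTotalDegree (Fin n) ℝ (d + 1)).subtype).mkQ q) =
      L ((p : MvPolynomial (Fin n) ℝ) * (q : MvPolynomial (Fin n) ℝ)))
    (Pr : (↥(restrictTotalDegree (Fin n) ℝ (d + 1)) ⧸
        U.comap (restrictTotalDegree (Fin n) ℝ (d + 1)).subtype) →ₗ[ℝ]
      (↥(restrictTotalDegree (Fin n) ℝ (d + 1)) ⧸
        U.comap (restrictTotalDegree (Fin n) ℝ (d + 1)).subtype))
    (hPr1 : ∀ x, Pr x ∈
      LinearMap.range ((U.comap (restrictTotalDegree (Fin n) ℝ (d + 1)).subtype).mkQ ∘ₗ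
        Submodule.inclusion hAB))
    (hPr2 : ∀ x, ∀ t ∈
      LinearMap.range ((U.comap (restrictTotalDegree (Fin n) ℝ (d + 1)).subtype).mkQ ∘ₗ
        Submodule.inclusion hAB), β (x - Pr x) t = 0)
    (M : Fin n → Module.End ℝ
      ↥(LinearMap.range ((U.comap (restrictTotalDegree (Fin n) ℝ (d + 1)).subtype).mkQ ∘ₗ
        Submodule.inclusion hAB)))
    (hM : ∀ (i : Fin n) (p q : ↥(restrictTotalDegree (Fin n) ℝ d)),
      β (M i ⟨((U.comap (restrictTotalDegree (Fin n) ℝ (d + 1)).subtype).mkQ ∘ₗ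
            Submodule.inclusion hAB) p, ⟨p, rfl⟩⟩ :
          ↥(restrictTotalDegree (Fin n) ℝ (d + 1)) ⧸
            U.comap (restrictTotalDegree (Fin n) ℝ (d + 1)).subtype)
        (((U.comap (restrictTotalDegree (Fin n) ℝ (d + 1)).subtype).mkQ ∘ₗ
            Submodule.inclusion hAB) q) =
      L (X i * (p : MvPolynomial (Fin n) ℝ) * (q : MvPolynomial (Fin n) ℝ)))
    (hcomm : ∀ i j : Fin n, M i * M j = M j * M i) :
    ∀ p : ↥(restrictTotalDegree (Fin n) ℝ (d + 1)),
      (((∑ α ∈ (p : MvPolynomial (Fin n) ℝ).support,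
          (p : MvPolynomial (Fin n) ℝ).coeff α •
            (List.ofFn fun i : Fin n => M i ^ α i).prod)
        ⟨((U.comap (restrictTotalDegree (Fin n) ℝ (d + 1)).subtype).mkQ ∘ₗ
            Submodule.inclusion hAB) ⟨1, h1⟩, ⟨⟨1, h1⟩, rfl⟩⟩ :
          ↥(LinearMap.range
            ((U.comap (restrictTotalDegree (Fin n) ℝ (d + 1)).subtype).mkQ ∘ₗ
              Submodule.inclusion hAB))) :
        ↥(restrictTotalDegree (Fin n) ℝ (d + 1)) ⧸
          U.comap (restrictTotalDegree (Fin n) ℝ (d + 1)).subtype) =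
      Pr ((U.comap (restrictTotalDegree (Fin n) ℝ (d + 1)).subtype).mkQ p) := by
  have hLE : ∀ p ∈ restrictTotalDegree (Fin n) ℝ (d + 1), 0 ≤ L (p ^ 2) :=
    fun p hp => hL p ((mem_restrictTotalDegree _ _ _).1 hp)
  have hN : ∀ p, p ∈ U.comap (restrictTotalDegree (Fin n) ℝ (d + 1)).subtype ↔
      ∀ q : restrictTotalDegree (Fin n) ℝ (d + 1), L (p * q) = 0 := fun p => by
    simp only [Submodule.mem_comap, Submodule.subtype_apply, hU,
      (mem_restrictTotalDegree _ _ _).1 p.2, true_and, Subtype.forall, mem_restrictTotalDegree]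
  intro p
  refine eq_of_forall_pairing_eq hLE hN hβ hAB (Subtype.prop _) (hPr1 _) fun q => ?_
  have hproj := hPr2 (Submodule.mkQ _ p) _ ⟨q, rfl⟩
  rw [(isLinearMap_pairing_left hβ _).map_sub, sub_eq_zero] at hproj
  exact (pairing_eval_apply_one hLE hN hβ h1 hM hcomm p q).trans
    ((hβ p (Submodule.inclusion hAB q)).symm.trans hproj)
end

section
/- Assume the truncated GNS multiplication operators of L pairwise commute. Then there exist pairwise distinct points a₁,…,a_N ∈ ℝⁿ and weights λ₁,…,λ_N > 0 with N = dim(T_L) such that L(pq) = Σⱼ₌₁^N λⱼ p(aⱼ) q(aⱼ) for all p ∈ ℝ[X]_{d+1} and all q ∈ ℝ[X]_d + U_L. In particular L admits a Gaussian quadrature rule, i.e. a quadrature rule on ℝ[X]_{2d+1} with the minimal number dim(T_L) of nodes. -/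
/-!
The truncated GNS construction makes `V_L = ℝ[X]_{d+1}/U_L` a Euclidean space with
`⟨p̄, q̄⟩ = L(pq)`, and the commuting symmetric operators `M_{L,i}` give an orthonormal basis
`v_j = r̄_j` (`r_j ∈ ℝ[X]_d`) of `T_L` with `M_{L,i} v_j = a_{j,i} v_j`. Read through `L`, the
eigenvalue equations say `L(X_i m r_j) = a_{j,i} L(m r_j)`, so by induction over monomials
`L(p r_j) = p(a_j) L(r_j)` whenever `deg p ≤ d + 1`. Parseval's identity in `T_L` then turns
`L(pq)` into `Σ_j L(p r_j) L(q r_j) = Σ_j L(r_j)² p(a_j) q(a_j)`. Orthonormality of the `r_j`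
forces `L(r_j) ≠ 0` and distinct nodes, elements of `U_L` vanish at the nodes, and the rule is
exact on `ℝ[X]_{2d+1} = ℝ[X]_{d+1} · ℝ[X]_d`.
-/

open MvPolynomial Module
open scoped InnerProductSpace

theorem Finsupp.exists_add_eq_of_sum_le {σ : Type*} (s : σ →₀ ℕ) {a b : ℕ}
    (h : (s.sum fun _ e => e) ≤ a + b) :
    ∃ t u : σ →₀ ℕ, t + u = s ∧ (t.sum fun _ e => e) ≤ a ∧ (u.sum fun _ e => e) ≤ b := by
  classical
  obtain ⟨l, hl⟩ : ∃ l : List σ, (l : Multiset σ) = toMultiset s := Quotient.exists_rep _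
  have hlen : l.length = s.sum fun _ e => e := by
    rw [← Multiset.coe_card, hl, card_toMultiset]
    rfl
  refine ⟨Multiset.toFinsupp (l.take a), Multiset.toFinsupp (l.drop a), ?_, ?_, ?_⟩
  · rw [← map_add, Multiset.coe_add, List.take_append_drop, hl, toMultiset_toFinsupp]
  · have : (Multiset.toFinsupp (l.take a : Multiset σ)).sum (fun _ e => e) = (l.take a).length :=
      Multiset.toFinsupp_sum_eq _
    rw [this, List.length_take]
    exact min_le_left _ _
  · have : (Multiset.toFinsupp (l.drop a : Multiset σ)).sum (fun _ e => e) = (l.drop a).length :=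
      Multiset.toFinsupp_sum_eq _
    rw [this, List.length_drop]
    omega

namespace MvPolynomial

variable {σ : Type*}

theorem restrictTotalDegree_add_le_mul {R : Type*} [CommSemiring R] (a b : ℕ) :
    restrictTotalDegree σ R (a + b) ≤ restrictTotalDegree σ R a * restrictTotalDegree σ R b := by
  intro p hp
  rw [mem_restrictTotalDegree] at hp
  rw [p.as_sum]
  refine Submodule.sum_mem _ fun s hs => ?_
  obtain ⟨t, u, rfl, ht, hu⟩ := Finsupp.exists_add_eq_of_sum_le s ((le_totalDegree hs).trans hp)
  rw [← mul_one (coeff _ p), ← monomial_mul]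
  exact Submodule.mul_mem_mul
    ((mem_restrictTotalDegree _ _ _).2 ((totalDegree_monomial_le _ _).trans ht))
    ((mem_restrictTotalDegree _ _ _).2 ((totalDegree_monomial_le _ _).trans hu))

theorem apply_mul_eq_eval_mul_of_apply_X_mul {R : Type*} [CommRing R] [IsDomain R]
    (L : MvPolynomial σ R →ₗ[R] R) {w : MvPolynomial σ R} {c : σ → R} {d : ℕ}
    (h : ∀ i m, m.totalDegree ≤ d → L (X i * m * w) = c i * L (m * w))
    {p : MvPolynomial σ R} (hp : p.totalDegree ≤ d + 1) :
    L (p * w) = eval c p * L w := by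
  have monomial_case : ∀ s a, (monomial s a).totalDegree ≤ d + 1 →
      L (monomial s a * w) = eval c (monomial s a) * L w := by
    refine induction_on_monomial (fun a _ => ?_) (fun q i ih hq => ?_)
    · rw [C_mul', map_smul, eval_C, smul_eq_mul]
    · rcases eq_or_ne q 0 with rfl | hq0
      · simp
      rw [totalDegree_mul_of_isDomain hq0 (X_ne_zero i), totalDegree_X] at hq
      rw [mul_comm q, h i q (by omega), eval_mul, eval_X, ih (by omega)]
      ring
  rw [p.as_sum, Finset.sum_mul, map_sum, map_sum, Finset.sum_mul]
  exact Finset.sum_congr rfl fun s hs =>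
    monomial_case s _ ((totalDegree_monomial_le _ _).trans ((le_totalDegree hs).trans hp))

end MvPolynomial

/-- `r j ∈ ℝ[X]_d` represent an orthonormal basis `v_j` of `T_L` with `M_{L,i} v_j = a_{j,i} v_j`,
everything expressed through `L`; the last field is Parseval's identity for the basis `v_j`,
paired with `V_L`. -/
structure IsCommonEigenbasis {σ ι K : Type*} [Fintype ι] [Field K]
    (L : MvPolynomial σ K →ₗ[K] K) (d : ℕ) (r : ι → MvPolynomial σ K) (a : ι → σ → K) : Prop where
  totalDegree_le : ∀ j, (r j).totalDegree ≤ d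
  apply_mul_self : ∀ j, L (r j * r j) = 1
  apply_mul_of_ne : ∀ j k, j ≠ k → L (r j * r k) = 0
  apply_X_mul : ∀ j i m, m.totalDegree ≤ d → L (X i * m * r j) = a j i * L (m * r j)
  apply_mul_eq_sum : ∀ p q, p.totalDegree ≤ d + 1 → q.totalDegree ≤ d →
    L (p * q) = ∑ j, L (p * r j) * L (q * r j)

namespace IsCommonEigenbasis

variable {σ ι K : Type*} [Fintype ι] [Field K] {L : MvPolynomial σ K →ₗ[K] K} {d : ℕ}
  {r : ι → MvPolynomial σ K} {a : ι → σ → K}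

theorem apply_mul_eq_eval_mul (h : IsCommonEigenbasis L d r a) (j : ι)
    {p : MvPolynomial σ K} (hp : p.totalDegree ≤ d + 1) :
    L (p * r j) = eval (a j) p * L (r j) :=
  apply_mul_eq_eval_mul_of_apply_X_mul L (h.apply_X_mul j) hp

theorem eval_mul_apply_self (h : IsCommonEigenbasis L d r a) (j : ι) :
    eval (a j) (r j) * L (r j) = 1 := by
  rw [← h.apply_mul_eq_eval_mul j ((h.totalDegree_le j).trans d.le_succ), h.apply_mul_self]

theorem apply_ne_zero (h : IsCommonEigenbasis L d r a) (j : ι) : L (r j) ≠ 0 :=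
  right_ne_zero_of_mul_eq_one (h.eval_mul_apply_self j)

theorem injective (h : IsCommonEigenbasis L d r a) : Function.Injective a := by
  intro j k hjk
  by_contra hne
  have h0 : eval (a j) (r j) * L (r k) = 0 := by
    rw [hjk, ← h.apply_mul_eq_eval_mul k ((h.totalDegree_le j).trans d.le_succ),
      h.apply_mul_of_ne j k hne]
  exact mul_ne_zero (left_ne_zero_of_mul_eq_one (h.eval_mul_apply_self j)) (h.apply_ne_zero k) h0

theorem eval_eq_zero (h : IsCommonEigenbasis L d r a) {u : MvPolynomial σ K}
    (hu : u.totalDegree ≤ d + 1) (j : ι) (hu₀ : L (u * r j) = 0) : eval (a j) u = 0 := by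
  rw [h.apply_mul_eq_eval_mul j hu] at hu₀
  exact (mul_eq_zero.1 hu₀).resolve_right (h.apply_ne_zero j)

theorem apply_mul_eq_sum_eval (h : IsCommonEigenbasis L d r a) {p q : MvPolynomial σ K}
    (hp : p.totalDegree ≤ d + 1) (hq : q.totalDegree ≤ d) :
    L (p * q) = ∑ j, L (r j) ^ 2 * (eval (a j) p * eval (a j) q) := by
  rw [h.apply_mul_eq_sum p q hp hq]
  refine Finset.sum_congr rfl fun j _ => ?_
  rw [h.apply_mul_eq_eval_mul j hp, h.apply_mul_eq_eval_mul j (hq.trans d.le_succ)]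
  ring

theorem apply_mul_eq_sum_eval_of_mem_sup (h : IsCommonEigenbasis L d r a)
    {U : Submodule K (MvPolynomial σ K)}
    (hU : ∀ u ∈ U, u.totalDegree ≤ d + 1 ∧
      ∀ q : MvPolynomial σ K, q.totalDegree ≤ d + 1 → L (u * q) = 0)
    {p q : MvPolynomial σ K} (hp : p.totalDegree ≤ d + 1)
    (hq : q ∈ restrictTotalDegree σ K d ⊔ U) :
    L (p * q) = ∑ j, L (r j) ^ 2 * (eval (a j) p * eval (a j) q) := by
  obtain ⟨q₀, hq₀, u, hu, rfl⟩ := Submodule.mem_sup.1 hq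
  have eval_u (j : ι) : eval (a j) u = 0 :=
    h.eval_eq_zero (hU u hu).1 j ((hU u hu).2 _ ((h.totalDegree_le j).trans d.le_succ))
  rw [mul_add, map_add, mul_comm p u, (hU u hu).2 p hp, add_zero,
    h.apply_mul_eq_sum_eval hp ((mem_restrictTotalDegree _ _ _).1 hq₀)]
  simp only [map_add, eval_u, add_zero]

theorem apply_eq_sum_eval (h : IsCommonEigenbasis L d r a) {s : MvPolynomial σ K}
    (hs : s.totalDegree ≤ 2 * d + 1) :
    L s = ∑ j, L (r j) ^ 2 * eval (a j) s := by
  let quadrature : MvPolynomial σ K →ₗ[K] K := ∑ j, L (r j) ^ 2 • (aeval (a j)).toLinearMap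
  suffices restrictTotalDegree σ K (d + 1 + d) ≤ LinearMap.ker (L - quadrature) by
    have := this ((mem_restrictTotalDegree _ _ _).2 (by omega : s.totalDegree ≤ d + 1 + d))
    simpa [quadrature, sub_eq_zero] using this
  refine (restrictTotalDegree_add_le_mul _ _).trans (Submodule.mul_le.2 fun p hp q hq => ?_)
  rw [mem_restrictTotalDegree] at hp hq
  simp [quadrature, h.apply_mul_eq_sum_eval hp hq]

end IsCommonEigenbasis

@[reducible]
def InnerProductSpace.Core.ofBilinForm {W V : Type*} [AddCommGroup W] [Module ℝ W]
    [AddCommGroup V] [Module ℝ V] (B : LinearMap.BilinForm ℝ W) (hB : LinearMap.IsSymm B)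
    (hB₀ : ∀ x, 0 ≤ B x x) (π : W →ₗ[ℝ] V) (hπ : Function.Surjective π)
    (hker : LinearMap.ker B ≤ LinearMap.ker π) (β : V → V → ℝ)
    (hβ : ∀ x y, β (π x) (π y) = B x y) : InnerProductSpace.Core ℝ V where
  inner := β
  conj_inner_symm x y := by
    obtain ⟨x, rfl⟩ := hπ x
    obtain ⟨y, rfl⟩ := hπ y
    simpa only [hβ, conj_trivial, RingHom.id_apply] using hB.eq y x
  re_inner_nonneg x := by
    obtain ⟨x, rfl⟩ := hπ x
    exact (hβ x x).symm ▸ hB₀ x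
  add_left x y z := by
    obtain ⟨x, rfl⟩ := hπ x
    obtain ⟨y, rfl⟩ := hπ y
    obtain ⟨z, rfl⟩ := hπ z
    rw [← map_add, hβ, hβ, hβ, map_add, LinearMap.add_apply]
  smul_left x y t := by
    obtain ⟨x, rfl⟩ := hπ x
    obtain ⟨y, rfl⟩ := hπ y
    rw [← map_smul, hβ, hβ, map_smul, LinearMap.smul_apply, smul_eq_mul, conj_trivial]
  definite x hx := by
    obtain ⟨x, rfl⟩ := hπ x
    -- Cauchy–Schwarz: an isotropic vector of a semidefinite form lies in its kernel.
    rw [hβ, B.apply_apply_same_eq_zero_iff hB₀ hB] at hx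
    exact hker hx

@[reducible]
def InnerProductSpace.Core.gns {A : Type*} [CommRing A] [Algebra ℝ A] (L : A →ₗ[ℝ] ℝ)
    {S : Submodule ℝ A} (hL : ∀ p ∈ S, 0 ≤ L (p ^ 2)) {U : Submodule ℝ A}
    (hU : ∀ p ∈ S, (∀ q ∈ S, L (p * q) = 0) → p ∈ U)
    (β : S ⧸ U.comap S.subtype → S ⧸ U.comap S.subtype → ℝ)
    (hβ : ∀ p q : S, β ((U.comap S.subtype).mkQ p) ((U.comap S.subtype).mkQ q) = L (p * q)) :
    InnerProductSpace.Core ℝ (S ⧸ U.comap S.subtype) :=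
  ofBilinForm (((LinearMap.mul ℝ A).compr₂ L).domRestrict₁₂ S S)
    ⟨fun _ _ => congrArg L (mul_comm _ _)⟩ (fun p => (sq (p : A) ▸ hL p p.2 :))
    _ (Submodule.mkQ_surjective _)
    (fun p hp => (Submodule.Quotient.mk_eq_zero _).2 (hU p p.2 fun q hq => congr($hp ⟨q, hq⟩)))
    β hβ

open scoped Function in
theorem LinearMap.IsSymmetric.exists_orthonormalBasis_apply_eq_smul {𝕜 E ι : Type*} [RCLike 𝕜]
    [NormedAddCommGroup E] [InnerProductSpace 𝕜 E] [FiniteDimensional 𝕜 E]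
    {T : ι → Module.End 𝕜 E} (hT : ∀ i, (T i).IsSymmetric) (hC : Pairwise (Commute on T)) :
    ∃ (v : OrthonormalBasis (Fin (finrank 𝕜 E)) 𝕜 E) (μ : Fin (finrank 𝕜 E) → ι → 𝕜),
      ∀ j i, T i (v j) = μ j i • v j := by
  classical
  let W (χ : ι → 𝕜) : Submodule 𝕜 E := ⨅ i, Module.End.eigenspace (T i) (χ i)
  have horth := orthogonalFamily_iInf_eigenspaces hT
  let := horth.independent.fintypeNeBotOfFiniteDimensional
  have hint : DirectSum.IsInternal fun χ : {χ // W χ ≠ ⊥} => W χ :=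
    DirectSum.isInternal_ne_bot_iff.2 (directSum_isInternal_of_pairwise_commute hT hC)
  have horth' : OrthogonalFamily 𝕜 (fun χ : {χ // W χ ≠ ⊥} => W χ) fun χ => (W χ).subtypeₗᵢ :=
    horth.comp Subtype.val_injective
  refine ⟨hint.subordinateOrthonormalBasis rfl horth',
    fun j => (hint.subordinateOrthonormalBasisIndex rfl j horth').val, fun j i => ?_⟩
  exact Module.End.mem_eigenspace_iff.1
    ((Submodule.mem_iInf _).1 (hint.subordinateOrthonormalBasis_subordinate rfl j horth') i)

theorem exists_isCommonEigenbasis {σ V : Type*} [Finite σ] [NormedAddCommGroup V]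
    [InnerProductSpace ℝ V] (L : MvPolynomial σ ℝ →ₗ[ℝ] ℝ) {d : ℕ}
    (π : restrictTotalDegree σ ℝ (d + 1) →ₗ[ℝ] V) (φ : restrictTotalDegree σ ℝ d →ₗ[ℝ] V)
    (hπ : ∀ p q, ⟪π p, φ q⟫_ℝ = L ((p : MvPolynomial σ ℝ) * (q : MvPolynomial σ ℝ)))
    (hφ : ∀ p q, ⟪φ p, φ q⟫_ℝ = L ((p : MvPolynomial σ ℝ) * (q : MvPolynomial σ ℝ)))
    (M : σ → Module.End ℝ (LinearMap.range φ))
    (hM : ∀ i (p q : restrictTotalDegree σ ℝ d),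
      ⟪(M i ⟨φ p, LinearMap.mem_range_self φ p⟩ : V), φ q⟫_ℝ =
        L (X i * (p : MvPolynomial σ ℝ) * (q : MvPolynomial σ ℝ)))
    (hcomm : ∀ i j, M i * M j = M j * M i) :
    ∃ (r : Fin (finrank ℝ (LinearMap.range φ)) → MvPolynomial σ ℝ)
      (a : Fin (finrank ℝ (LinearMap.range φ)) → σ → ℝ), IsCommonEigenbasis L d r a := by
  have hsymm (i : σ) : (M i).IsSymmetric := by
    rintro ⟨-, p, rfl⟩ ⟨-, q, rfl⟩
    simp only [Submodule.coe_inner]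
    rw [hM, real_inner_comm, hM, mul_right_comm]
  obtain ⟨v, a, hv⟩ := LinearMap.IsSymmetric.exists_orthonormalBasis_apply_eq_smul hsymm
    fun i j _ => hcomm i j
  choose r hr using fun j => LinearMap.mem_range.1 (v j).2
  refine ⟨fun j => r j, a, ⟨fun j => (mem_restrictTotalDegree _ _ _).1 (r j).2, fun j => ?_,
    fun j k hjk => ?_, fun j i m hm => ?_, fun p q hp hq => ?_⟩⟩
  · rw [← hφ, hr, ← Submodule.coe_inner, real_inner_self_eq_norm_sq, v.orthonormal.1 j, one_pow]
  · rw [← hφ, hr, hr, ← Submodule.coe_inner, v.orthonormal.2 hjk]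
  · let m' : restrictTotalDegree σ ℝ d := ⟨m, (mem_restrictTotalDegree _ _ _).2 hm⟩
    let x : LinearMap.range φ := ⟨φ m', LinearMap.mem_range_self φ m'⟩
    calc L (X i * m * (r j : MvPolynomial σ ℝ)) = ⟪M i x, v j⟫_ℝ := by
          rw [Submodule.coe_inner, ← hr, hM]
      _ = ⟪x, M i (v j)⟫_ℝ := hsymm i _ _
      _ = a j i * L (m * r j) := by rw [hv, inner_smul_right, Submodule.coe_inner, ← hr, hφ]
  · let p' : restrictTotalDegree σ ℝ (d + 1) := ⟨p, (mem_restrictTotalDegree _ _ _).2 hp⟩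
    let q' : restrictTotalDegree σ ℝ d := ⟨q, (mem_restrictTotalDegree _ _ _).2 hq⟩
    have expand_q : φ q' = ∑ j, ⟪(v j : V), φ q'⟫_ℝ • (v j : V) := by
      simpa using congrArg Subtype.val (v.sum_repr' ⟨φ q', LinearMap.mem_range_self φ q'⟩).symm
    calc L (p * q) = ⟪π p', φ q'⟫_ℝ := (hπ p' q').symm
      _ = ∑ j, L (p * r j) * L (q * r j) := by
        rw [expand_q, inner_sum]
        refine Finset.sum_congr rfl fun j _ => ?_
        rw [inner_smul_right, ← hr, hπ, hφ, mul_comm, mul_comm (r j : MvPolynomial σ ℝ)]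

/-- If the truncated GNS multiplication operators of `L` pairwise commute, then there exist
`N = dim T_L` pairwise distinct points `a₁,…,a_N ∈ ℝⁿ` and weights `λⱼ > 0` with
`L(pq) = Σⱼ λⱼ p(aⱼ) q(aⱼ)` for all `p ∈ ℝ[X]_{d+1}` and `q ∈ ℝ[X]_d + U_L`; in particular
`L` admits a Gaussian quadrature rule (a quadrature rule on `ℝ[X]_{2d+1}` with `dim T_L`
nodes). -/
theorem commuting_operators_quadrature {n d : ℕ}
    (L : MvPolynomial (Fin n) ℝ →ₗ[ℝ] ℝ)
    (hL : ∀ p : MvPolynomial (Fin n) ℝ, p.totalDegree ≤ d + 1 → 0 ≤ L (p ^ 2))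
    (U : Submodule ℝ (MvPolynomial (Fin n) ℝ))
    (hU : ∀ p : MvPolynomial (Fin n) ℝ, p ∈ U ↔ (p.totalDegree ≤ d + 1 ∧
      ∀ q : MvPolynomial (Fin n) ℝ, q.totalDegree ≤ d + 1 → L (p * q) = 0))
    (hAB : restrictTotalDegree (Fin n) ℝ d ≤ restrictTotalDegree (Fin n) ℝ (d + 1))
    (β : (↥(restrictTotalDegree (Fin n) ℝ (d + 1)) ⧸
        U.comap (restrictTotalDegree (Fin n) ℝ (d + 1)).subtype) →
      (↥(restrictTotalDegree (Fin n) ℝ (d + 1)) ⧸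
        U.comap (restrictTotalDegree (Fin n) ℝ (d + 1)).subtype) → ℝ)
    (hβ : ∀ p q : ↥(restrictTotalDegree (Fin n) ℝ (d + 1)),
      β ((U.comap (restrictTotalDegree (Fin n) ℝ (d + 1)).subtype).mkQ p)
        ((U.comap (restrictTotalDegree (Fin n) ℝ (d + 1)).subtype).mkQ q) =
      L ((p : MvPolynomial (Fin n) ℝ) * (q : MvPolynomial (Fin n) ℝ)))
    (M : Fin n → Module.End ℝ
      ↥(LinearMap.range ((U.comap (restrictTotalDegree (Fin n) ℝ (d + 1)).subtype).mkQ ∘ₗ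
        Submodule.inclusion hAB)))
    (hM : ∀ (i : Fin n) (p q : ↥(restrictTotalDegree (Fin n) ℝ d)),
      β (M i ⟨((U.comap (restrictTotalDegree (Fin n) ℝ (d + 1)).subtype).mkQ ∘ₗ
            Submodule.inclusion hAB) p, ⟨p, rfl⟩⟩ :
          ↥(restrictTotalDegree (Fin n) ℝ (d + 1)) ⧸
            U.comap (restrictTotalDegree (Fin n) ℝ (d + 1)).subtype)
        (((U.comap (restrictTotalDegree (Fin n) ℝ (d + 1)).subtype).mkQ ∘ₗ
            Submodule.inclusion hAB) q) =
      L (X i * (p : MvPolynomial (Fin n) ℝ) * (q : MvPolynomial (Fin n) ℝ)))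
    (hcomm : ∀ i j : Fin n, M i * M j = M j * M i) :
    ∃ a : Fin (Module.finrank ℝ
        ↥(LinearMap.range ((U.comap (restrictTotalDegree (Fin n) ℝ (d + 1)).subtype).mkQ ∘ₗ
          Submodule.inclusion hAB))) → (Fin n → ℝ),
      Function.Injective a ∧
      ∃ lam : Fin (Module.finrank ℝ
          ↥(LinearMap.range ((U.comap (restrictTotalDegree (Fin n) ℝ (d + 1)).subtype).mkQ ∘ₗ
            Submodule.inclusion hAB))) → ℝ,
        (∀ j, 0 < lam j) ∧
        (∀ p q : MvPolynomial (Fin n) ℝ, p.totalDegree ≤ d + 1 →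
          q ∈ restrictTotalDegree (Fin n) ℝ d ⊔ U →
          L (p * q) = ∑ j, lam j * (MvPolynomial.eval (a j) p * MvPolynomial.eval (a j) q)) ∧
        (∀ r : MvPolynomial (Fin n) ℝ, r.totalDegree ≤ 2 * d + 1 →
          L r = ∑ j, lam j * MvPolynomial.eval (a j) r) := by
  let core := InnerProductSpace.Core.gns L
    (fun p hp => hL p ((mem_restrictTotalDegree _ _ _).1 hp))
    (fun p hp h => (hU p).2 ⟨(mem_restrictTotalDegree _ _ _).1 hp,
      fun q hq => h q ((mem_restrictTotalDegree _ _ _).2 hq)⟩) β hβ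
  let : NormedAddCommGroup _ := core.toNormedAddCommGroup
  let : InnerProductSpace ℝ _ := .ofCore core.toCore
  obtain ⟨r, a, hr⟩ :=
    exists_isCommonEigenbasis L _ _ (fun p _ => hβ p _) (fun _ _ => hβ _ _) M hM hcomm
  exact ⟨a, hr.injective, fun j => L (r j) ^ 2, fun j => sq_pos_of_ne_zero (hr.apply_ne_zero j),
    fun p q hp hq => hr.apply_mul_eq_sum_eval_of_mem_sup (fun u hu => (hU u).1 hu) hp hq,
    fun s hs => hr.apply_eq_sum_eval hs⟩
end

section
/- (Möller-type lower bound) Suppose L ∈ ℝ[X₁,…,Xₙ]_{2d+2}* is nonnegative on squares and has a quadrature rule on ℝ[X]_{2d+1} with N pairwise distinct nodes. Then N ≥ dim(T_L) + (1/2)·max_{1≤j,k≤n} rk[M_{L,j}, M_{L,k}], where [A,B] = AB − BA is the commutator of the truncated GNS multiplication operators. -/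
/-!
The quadrature rule `Λ = ∑ λᵢ ev_{aᵢ}` agrees with `L` in degree `≤ 2d + 1`, so
`p ↦ (√λᵢ p(aᵢ))ᵢ` embeds `T_L` isometrically into `ℝᴺ`, and under this embedding `M_{L,i}`
becomes the compression `P Dᵢ P` of the diagonal operator `Dᵢ = diag(a₁ᵢ, …, a_Nᵢ)` to the image,
`P` being the orthogonal projection onto it. As the `Dᵢ` commute,
`P Dⱼ P Dₖ P - P Dₖ P Dⱼ P = P Dₖ Q Dⱼ P - P Dⱼ Q Dₖ P` with `Q = 1 - P`, a map of rank at most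
`2 rk Q = 2 (N - dim T_L)`.
-/

open MvPolynomial

open Module LinearMap in
theorem LinearMap.exists_injective_factor_of_ker_eq {R P T W : Type*} [Ring R]
    [AddCommGroup P] [Module R P] [AddCommGroup T] [Module R T] [AddCommGroup W] [Module R W]
    {f : P →ₗ[R] T} {g : P →ₗ[R] W} (h : ker f = ker g) :
    ∃ e : range f →ₗ[R] W, Function.Injective e ∧ ∀ x, e ⟨f x, mem_range_self f x⟩ = g x := by
  refine ⟨(range g).subtype ∘ₗ (g.quotKerEquivRange.toLinearMap ∘ₗ
    (Submodule.quotEquivOfEq _ _ h).toLinearMap ∘ₗ f.quotKerEquivRange.symm.toLinearMap),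
    (range g).injective_subtype.comp <| g.quotKerEquivRange.injective.comp <|
      (Submodule.quotEquivOfEq _ _ h).injective.comp f.quotKerEquivRange.symm.injective,
    fun x => ?_⟩
  simp [quotKerEquivRange_symm_apply_image]

section Compression

open Module LinearMap

variable {𝕜 V E : Type*} [RCLike 𝕜] [AddCommGroup V] [Module 𝕜 V]
  [NormedAddCommGroup E] [InnerProductSpace 𝕜 E] [FiniteDimensional 𝕜 E]

local notation "⟪" x ", " y "⟫" => inner 𝕜 x y

def IsCompression (e : V →ₗ[𝕜] E) (A : Module.End 𝕜 V) (D : Module.End 𝕜 E) : Prop :=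
  ∀ x y, ⟪e (A x), e y⟫ = ⟪D (e x), e y⟫

theorem IsCompression.apply_eq_starProjection {e : V →ₗ[𝕜] E} {A : Module.End 𝕜 V}
    {D : Module.End 𝕜 E} (hA : IsCompression e A D) (x : V) :
    e (A x) = (range e).starProjection (D (e x)) := by
  refine (Submodule.eq_starProjection_of_mem_of_inner_eq_zero (mem_range_self e _) ?_).symm
  rintro _ ⟨y, rfl⟩
  rw [inner_sub_left, hA, sub_self]

theorem IsCompression.finrank_range_commutator_le {e : V →ₗ[𝕜] E} (he : Function.Injective e)
    {A B : Module.End 𝕜 V} {DA DB : Module.End 𝕜 E} (hA : IsCompression e A DA)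
    (hB : IsCompression e B DB) (hD : Commute DA DB) :
    2 * finrank 𝕜 V + finrank 𝕜 (range (A * B - B * A)) ≤ 2 * finrank 𝕜 E := by
  set K := range e
  set P : Module.End 𝕜 E := (K.starProjection : E →ₗ[𝕜] E)
  have hrange : range (e ∘ₗ (A * B - B * A)) ≤ Kᗮ.map (P * DB) ⊔ Kᗮ.map (P * DA) := by
    rintro _ ⟨x, rfl⟩
    have key : e ((A * B - B * A) x) =
        (P * DB) (Kᗮ.starProjection (DA (e x))) - (P * DA) (Kᗮ.starProjection (DB (e x))) := by
      have hc : DA (DB (e x)) = DB (DA (e x)) := congr($hD (e x))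
      simp only [Module.End.mul_apply, LinearMap.sub_apply, map_sub, ContinuousLinearMap.coe_coe,
        hA.apply_eq_starProjection, hB.apply_eq_starProjection,
        Submodule.starProjection_orthogonal_val, P, hc]
      abel
    rw [comp_apply, key]
    exact Submodule.sub_mem _ (Submodule.mem_sup_left (Submodule.mem_map_of_mem
      (Submodule.starProjection_apply_mem _ _)))
      (Submodule.mem_sup_right (Submodule.mem_map_of_mem
      (Submodule.starProjection_apply_mem _ _)))
  have hcomm : finrank 𝕜 (range (A * B - B * A)) ≤ 2 * finrank 𝕜 Kᗮ := by
    calc finrank 𝕜 (range (A * B - B * A))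
        = finrank 𝕜 (range (e ∘ₗ (A * B - B * A))) := by
          rw [range_comp]
          exact (Submodule.equivMapOfInjective e he _).finrank_eq
      _ ≤ finrank 𝕜 (Kᗮ.map (P * DB)) + finrank 𝕜 (Kᗮ.map (P * DA)) :=
          (Submodule.finrank_mono hrange).trans (Submodule.finrank_add_le_finrank_add_finrank _ _)
      _ ≤ 2 * finrank 𝕜 Kᗮ := by
          have := Submodule.finrank_map_le (P * DB) Kᗮ
          have := Submodule.finrank_map_le (P * DA) Kᗮ
          omega
  have hV : finrank 𝕜 V = finrank 𝕜 K := (LinearEquiv.ofInjective e he).finrank_eq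
  have := K.finrank_add_finrank_orthogonal
  omega

end Compression

section Quadrature

variable {σ ι : Type*} (lam : ι → ℝ) (a : ι → σ → ℝ)

noncomputable def weightedEval : MvPolynomial σ ℝ →ₗ[ℝ] EuclideanSpace ℝ ι where
  toFun p := WithLp.toLp 2 fun i => √(lam i) * eval (a i) p
  map_add' p q := by ext i; simp [mul_add]
  map_smul' c p := by ext i; simp [mul_left_comm]

@[simp]
theorem weightedEval_apply (p : MvPolynomial σ ℝ) (i : ι) :
    weightedEval lam a p i = √(lam i) * eval (a i) p :=
  rfl

def diagMul (c : ι → ℝ) : Module.End ℝ (EuclideanSpace ℝ ι) where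
  toFun v := WithLp.toLp 2 fun i => c i * v i
  map_add' v w := by ext i; simp [mul_add]
  map_smul' r v := by ext i; simp [mul_left_comm]

@[simp]
theorem diagMul_apply (c : ι → ℝ) (v : EuclideanSpace ℝ ι) (i : ι) :
    diagMul c v i = c i * v i :=
  rfl

theorem diagMul_commute (c c' : ι → ℝ) : Commute (diagMul c) (diagMul c') :=
  LinearMap.ext fun v => by ext i; simp [mul_left_comm]

theorem weightedEval_X_mul (j : σ) (p : MvPolynomial σ ℝ) :
    weightedEval lam a (X j * p) = diagMul (fun i => a i j) (weightedEval lam a p) := by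
  ext i; simp [mul_left_comm]

variable {lam}

theorem inner_weightedEval [Fintype ι] (hlam : ∀ i, 0 ≤ lam i) (p q : MvPolynomial σ ℝ) :
    inner ℝ (weightedEval lam a p) (weightedEval lam a q) = ∑ i, lam i * eval (a i) (p * q) := by
  simp only [PiLp.inner_apply, weightedEval_apply, RCLike.inner_apply, conj_trivial, map_mul]
  refine Finset.sum_congr rfl fun i _ => ?_
  linear_combination eval (a i) p * eval (a i) q * Real.mul_self_sqrt (hlam i)

theorem weightedEval_eq_zero_iff (hlam : ∀ i, 0 < lam i) (p : MvPolynomial σ ℝ) :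
    weightedEval lam a p = 0 ↔ ∀ i, eval (a i) p = 0 := by
  simp [WithLp.ext_iff, funext_iff, (Real.sqrt_pos.2 (hlam _)).ne']

end Quadrature

section GNS

open LinearMap

variable {σ ι : Type*} [Fintype ι] {d : ℕ} {L : MvPolynomial σ ℝ →ₗ[ℝ] ℝ} {lam : ι → ℝ}
  {a : ι → σ → ℝ}

theorem inner_weightedEval_of_quadrature (hlam : ∀ i, 0 ≤ lam i)
    (hq : ∀ g : MvPolynomial σ ℝ, g.totalDegree ≤ 2 * d + 1 → L g = ∑ i, lam i * eval (a i) g)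
    {p q : MvPolynomial σ ℝ} (hpq : (p * q).totalDegree ≤ 2 * d + 1) :
    inner ℝ (weightedEval lam a p) (weightedEval lam a q) = L (p * q) := by
  rw [inner_weightedEval a hlam, hq _ hpq]

theorem weightedEval_eq_zero_iff_mem (hlam : ∀ i, 0 < lam i)
    (hq : ∀ g : MvPolynomial σ ℝ, g.totalDegree ≤ 2 * d + 1 → L g = ∑ i, lam i * eval (a i) g)
    {U : Submodule ℝ (MvPolynomial σ ℝ)}
    (hU : ∀ p : MvPolynomial σ ℝ, p ∈ U ↔ (p.totalDegree ≤ d + 1 ∧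
      ∀ q : MvPolynomial σ ℝ, q.totalDegree ≤ d + 1 → L (p * q) = 0))
    {p : MvPolynomial σ ℝ} (hp : p.totalDegree ≤ d) :
    weightedEval lam a p = 0 ↔ p ∈ U := by
  rw [hU]
  constructor
  · intro h
    refine ⟨by omega, fun q hq' => ?_⟩
    have hpq : (p * q).totalDegree ≤ 2 * d + 1 := (totalDegree_mul p q).trans (by omega)
    simp [hq _ hpq, (weightedEval_eq_zero_iff a hlam p).1 h]
  · rintro ⟨-, h⟩
    have hpp : (p * p).totalDegree ≤ 2 * d + 1 := (totalDegree_mul p p).trans (by omega)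
    rw [← inner_self_eq_zero (𝕜 := ℝ),
      inner_weightedEval_of_quadrature (fun i => (hlam i).le) hq hpp]
    exact h p (by omega)

theorem isCompression_diagMul_of_quadrature {T : Type*} [AddCommGroup T] [Module ℝ T]
    (hlam : ∀ i, 0 ≤ lam i)
    (hq : ∀ g : MvPolynomial σ ℝ, g.totalDegree ≤ 2 * d + 1 → L g = ∑ i, lam i * eval (a i) g)
    {π : restrictTotalDegree σ ℝ d →ₗ[ℝ] T} {β : T → T → ℝ}
    (hβ : ∀ p q : restrictTotalDegree σ ℝ d, β (π p) (π q) = L ((p : MvPolynomial σ ℝ) * q))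
    {j : σ} {M : Module.End ℝ (range π)}
    (hM : ∀ p q : restrictTotalDegree σ ℝ d,
      β (M ⟨π p, mem_range_self π p⟩) (π q) =
        L (X j * (p : MvPolynomial σ ℝ) * (q : MvPolynomial σ ℝ)))
    {e : range π →ₗ[ℝ] EuclideanSpace ℝ ι}
    (he : ∀ p, e ⟨π p, mem_range_self π p⟩ = weightedEval lam a p) :
    IsCompression e M (diagMul fun i => a i j) := by
  have hdeg (p : restrictTotalDegree σ ℝ d) : (p : MvPolynomial σ ℝ).totalDegree ≤ d :=
    (mem_restrictTotalDegree _ _ _).1 p.2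
  rintro ⟨_, p, rfl⟩ ⟨_, q, rfl⟩
  obtain ⟨r, hr⟩ := (M ⟨π p, mem_range_self π p⟩).2
  have hXp : (X j * (p : MvPolynomial σ ℝ) * (q : MvPolynomial σ ℝ)).totalDegree ≤ 2 * d + 1 := by
    have := (totalDegree_X (R := ℝ) j).le; have := hdeg p; have := hdeg q
    exact (totalDegree_mul _ _).trans (add_le_add (totalDegree_mul _ _) le_rfl) |>.trans (by omega)
  have hrq : ((r : MvPolynomial σ ℝ) * q).totalDegree ≤ 2 * d + 1 :=
    (totalDegree_mul _ _).trans (by have := hdeg r; have := hdeg q; omega)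
  have hMp : M ⟨π p, mem_range_self π p⟩ = ⟨π r, mem_range_self π r⟩ := Subtype.ext hr.symm
  rw [hMp, he, he, he, ← weightedEval_X_mul,
    inner_weightedEval_of_quadrature hlam hq hrq, inner_weightedEval_of_quadrature hlam hq hXp,
    ← hβ, hr, hM]

end GNS

theorem moller_lower_bound_general {n d N : ℕ}
    (L : MvPolynomial (Fin n) ℝ →ₗ[ℝ] ℝ)
    (U : Submodule ℝ (MvPolynomial (Fin n) ℝ))
    (hU : ∀ p : MvPolynomial (Fin n) ℝ, p ∈ U ↔ (p.totalDegree ≤ d + 1 ∧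
      ∀ q : MvPolynomial (Fin n) ℝ, q.totalDegree ≤ d + 1 → L (p * q) = 0))
    (hAB : restrictTotalDegree (Fin n) ℝ d ≤ restrictTotalDegree (Fin n) ℝ (d + 1))
    (β : (↥(restrictTotalDegree (Fin n) ℝ (d + 1)) ⧸
        U.comap (restrictTotalDegree (Fin n) ℝ (d + 1)).subtype) →
      (↥(restrictTotalDegree (Fin n) ℝ (d + 1)) ⧸
        U.comap (restrictTotalDegree (Fin n) ℝ (d + 1)).subtype) → ℝ)
    (hβ : ∀ p q : ↥(restrictTotalDegree (Fin n) ℝ (d + 1)),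
      β ((U.comap (restrictTotalDegree (Fin n) ℝ (d + 1)).subtype).mkQ p)
        ((U.comap (restrictTotalDegree (Fin n) ℝ (d + 1)).subtype).mkQ q) =
      L ((p : MvPolynomial (Fin n) ℝ) * (q : MvPolynomial (Fin n) ℝ)))
    (M : Fin n → Module.End ℝ
      ↥(LinearMap.range ((U.comap (restrictTotalDegree (Fin n) ℝ (d + 1)).subtype).mkQ ∘ₗ
        Submodule.inclusion hAB)))
    (hM : ∀ (i : Fin n) (p q : ↥(restrictTotalDegree (Fin n) ℝ d)),
      β (M i ⟨((U.comap (restrictTotalDegree (Fin n) ℝ (d + 1)).subtype).mkQ ∘ₗ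
            Submodule.inclusion hAB) p, ⟨p, rfl⟩⟩ :
          ↥(restrictTotalDegree (Fin n) ℝ (d + 1)) ⧸
            U.comap (restrictTotalDegree (Fin n) ℝ (d + 1)).subtype)
        (((U.comap (restrictTotalDegree (Fin n) ℝ (d + 1)).subtype).mkQ ∘ₗ
            Submodule.inclusion hAB) q) =
      L (X i * (p : MvPolynomial (Fin n) ℝ) * (q : MvPolynomial (Fin n) ℝ)))
    (a : Fin N → (Fin n → ℝ))
    (lam : Fin N → ℝ) (hlam : ∀ i, 0 < lam i)
    (hq : ∀ g : MvPolynomial (Fin n) ℝ, g.totalDegree ≤ 2 * d + 1 →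
      L g = ∑ i, lam i * MvPolynomial.eval (a i) g) :
    ∀ j k : Fin n,
      2 * Module.finrank ℝ
          ↥(LinearMap.range ((U.comap (restrictTotalDegree (Fin n) ℝ (d + 1)).subtype).mkQ ∘ₗ
            Submodule.inclusion hAB)) +
        Module.finrank ℝ ↥(LinearMap.range (M j * M k - M k * M j)) ≤ 2 * N := by
  intro j k
  let π := (U.comap (restrictTotalDegree (Fin n) ℝ (d + 1)).subtype).mkQ ∘ₗ
    Submodule.inclusion hAB
  have hker : LinearMap.ker π = LinearMap.ker (weightedEval lam a ∘ₗ
      (restrictTotalDegree (Fin n) ℝ d).subtype) := by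
    ext p
    simp [π, weightedEval_eq_zero_iff_mem hlam hq hU ((mem_restrictTotalDegree _ _ _).1 p.2)]
  obtain ⟨e, he, hep⟩ := LinearMap.exists_injective_factor_of_ker_eq hker
  have hcomp (i : Fin n) : IsCompression e (M i) (diagMul fun l => a l i) :=
    isCompression_diagMul_of_quadrature (fun l => (hlam l).le) hq
      (fun p q => by simpa using hβ (Submodule.inclusion hAB p) (Submodule.inclusion hAB q))
      (hM i) hep
  simpa using (hcomp j).finrank_range_commutator_le he (hcomp k) (diagMul_commute _ _)

/-- Möller-type lower bound: if `L ∈ ℝ[X]_{2d+2}*` is nonnegative on squares and has a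
quadrature rule on `ℝ[X]_{2d+1}` with `N` pairwise distinct nodes, then
`N ≥ dim T_L + (1/2)·rk[M_{L,j}, M_{L,k}]` for all `j, k`, i.e.
`2N ≥ 2·dim T_L + rk[M_{L,j}, M_{L,k}]`, where `M_{L,i}` are the truncated GNS
multiplication operators on `T_L`. -/
theorem moller_lower_bound {n d N : ℕ}
    (L : MvPolynomial (Fin n) ℝ →ₗ[ℝ] ℝ)
    (hL : ∀ p : MvPolynomial (Fin n) ℝ, p.totalDegree ≤ d + 1 → 0 ≤ L (p ^ 2))
    (U : Submodule ℝ (MvPolynomial (Fin n) ℝ))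
    (hU : ∀ p : MvPolynomial (Fin n) ℝ, p ∈ U ↔ (p.totalDegree ≤ d + 1 ∧
      ∀ q : MvPolynomial (Fin n) ℝ, q.totalDegree ≤ d + 1 → L (p * q) = 0))
    (hAB : restrictTotalDegree (Fin n) ℝ d ≤ restrictTotalDegree (Fin n) ℝ (d + 1))
    (β : (↥(restrictTotalDegree (Fin n) ℝ (d + 1)) ⧸
        U.comap (restrictTotalDegree (Fin n) ℝ (d + 1)).subtype) →
      (↥(restrictTotalDegree (Fin n) ℝ (d + 1)) ⧸
        U.comap (restrictTotalDegree (Fin n) ℝ (d + 1)).subtype) → ℝ)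
    (hβ : ∀ p q : ↥(restrictTotalDegree (Fin n) ℝ (d + 1)),
      β ((U.comap (restrictTotalDegree (Fin n) ℝ (d + 1)).subtype).mkQ p)
        ((U.comap (restrictTotalDegree (Fin n) ℝ (d + 1)).subtype).mkQ q) =
      L ((p : MvPolynomial (Fin n) ℝ) * (q : MvPolynomial (Fin n) ℝ)))
    (M : Fin n → Module.End ℝ
      ↥(LinearMap.range ((U.comap (restrictTotalDegree (Fin n) ℝ (d + 1)).subtype).mkQ ∘ₗ
        Submodule.inclusion hAB)))
    (hM : ∀ (i : Fin n) (p q : ↥(restrictTotalDegree (Fin n) ℝ d)),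
      β (M i ⟨((U.comap (restrictTotalDegree (Fin n) ℝ (d + 1)).subtype).mkQ ∘ₗ
            Submodule.inclusion hAB) p, ⟨p, rfl⟩⟩ :
          ↥(restrictTotalDegree (Fin n) ℝ (d + 1)) ⧸
            U.comap (restrictTotalDegree (Fin n) ℝ (d + 1)).subtype)
        (((U.comap (restrictTotalDegree (Fin n) ℝ (d + 1)).subtype).mkQ ∘ₗ
            Submodule.inclusion hAB) q) =
      L (X i * (p : MvPolynomial (Fin n) ℝ) * (q : MvPolynomial (Fin n) ℝ)))
    (a : Fin N → (Fin n → ℝ)) (ha : Function.Injective a)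
    (lam : Fin N → ℝ) (hlam : ∀ i, 0 < lam i)
    (hq : ∀ g : MvPolynomial (Fin n) ℝ, g.totalDegree ≤ 2 * d + 1 →
      L g = ∑ i, lam i * MvPolynomial.eval (a i) g) :
    ∀ j k : Fin n,
      2 * Module.finrank ℝ
          ↥(LinearMap.range ((U.comap (restrictTotalDegree (Fin n) ℝ (d + 1)).subtype).mkQ ∘ₗ
            Submodule.inclusion hAB)) +
        Module.finrank ℝ ↥(LinearMap.range (M j * M k - M k * M j)) ≤ 2 * N :=
  moller_lower_bound_general L U hU hAB β hβ M hM a lam hlam hq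
end
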